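/- arXiv:2208.01241 — 4 statements merged into one kernel-verified Lean document; each statement's English description precedes it below -/
import Mathlib

section
/- Let a be a real number with 2/(1+e) < a < 2e/(1+e) and set r_a = (e−1)/(e+1) − |a−1|. Then the open disk {w ∈ ℂ : |w − a| < r_a} is contained in Δ_SG = {w ∈ ℂ : |Log(w/(2−w))| < 1}. -/
open Complex Metric

/-- Key estimate: for `‖v‖ < 1`,
`|log ((1+v)/(1-v))| ≤ Real.log (1+‖v‖) - Real.log (1-‖v‖)`. -/
lemma aux_log_bound (v : ℂ) (hv : ‖v‖ < 1) :
    ‖Complex.log ((1 + v) / (1 - v))‖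
      ≤ Real.log (1 + ‖v‖) - Real.log (1 - ‖v‖) := by
  have hre : |v.re| ≤ ‖v‖ := Complex.abs_re_le_norm v
  have h1 : (0 : ℝ) < (1 + v).re := by
    simp only [add_re, one_re]
    cases abs_le.mp hre with
    | intro h _ => linarith
  have h2 : (0 : ℝ) < (1 - v).re := by
    simp only [sub_re, one_re]
    cases abs_le.mp hre with
    | intro _ h => linarith
  have hne1 : (1 + v) ≠ 0 := fun h => by simp [h] at h1
  have hne2 : (1 - v) ≠ 0 := fun h => by simp [h] at h2
  set L : ℂ := Complex.log (1 + v) - Complex.log (1 - v) with hL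
  have hexp : Complex.exp L = (1 + v) / (1 - v) := by
    rw [hL, Complex.exp_sub, Complex.exp_log hne1, Complex.exp_log hne2]
  have harg1 : |Complex.arg (1 + v)| < Real.pi / 2 :=
    Complex.abs_arg_lt_pi_div_two_iff.mpr (Or.inl h1)
  have harg2 : |Complex.arg (1 - v)| < Real.pi / 2 :=
    Complex.abs_arg_lt_pi_div_two_iff.mpr (Or.inl h2)
  have hIm : |L.im| < Real.pi := by
    have : L.im = Complex.arg (1 + v) - Complex.arg (1 - v) := by
      simp [hL, Complex.log_im]
    rw [this]
    calc |Complex.arg (1 + v) - Complex.arg (1 - v)|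
        ≤ |Complex.arg (1 + v)| + |Complex.arg (1 - v)| := abs_sub _ _
      _ < Real.pi / 2 + Real.pi / 2 := by linarith
      _ = Real.pi := by ring
  have hlogeq : Complex.log ((1 + v) / (1 - v)) = L := by
    rw [← hexp, Complex.log_exp (by cases abs_lt.mp hIm; linarith)
      (le_of_lt (abs_lt.mp hIm).2)]
  rw [hlogeq]
  -- power series
  have hS : HasSum (fun n : ℕ => (-1) ^ (n + 1) * v ^ n / n + v ^ n / n)
      (Complex.log (1 + v) + -Complex.log (1 - v)) :=
    (Complex.hasSum_taylorSeries_log hv).add (Complex.hasSum_taylorSeries_neg_log hv)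
  have hg : Function.Injective (fun k : ℕ => 2 * k + 1) := by
    intro a b h; dsimp only at h; omega
  have h0 : ∀ n ∉ Set.range (fun k : ℕ => 2 * k + 1),
      ((-1 : ℂ) ^ (n + 1) * v ^ n / n + v ^ n / n) = 0 := by
    intro n hn
    have hev : Even n := by
      rcases Nat.even_or_odd n with h | h
      · exact h
      · exact absurd ⟨h.choose, h.choose_spec.symm⟩ hn
    obtain ⟨m, rfl⟩ := hev
    rw [(Odd.neg_one_pow ⟨m, by ring⟩ : ((-1 : ℂ)) ^ (m + m + 1) = -1)]
    ring
  have hS' : HasSum ((fun n : ℕ => (-1 : ℂ) ^ (n + 1) * v ^ n / n + v ^ n / n) ∘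
      (fun k : ℕ => 2 * k + 1)) (Complex.log (1 + v) + -Complex.log (1 - v)) :=
    (hg.hasSum_iff h0).mpr hS
  have hR : HasSum (fun k : ℕ => (2 : ℝ) * (1 / (2 * k + 1)) * ‖v‖ ^ (2 * k + 1))
      (Real.log (1 + ‖v‖) - Real.log (1 - ‖v‖)) :=
    Real.hasSum_log_sub_log_of_abs_lt_one (by rwa [_root_.abs_of_nonneg (norm_nonneg v)])
  have hterm : ∀ k : ℕ,
      ‖((fun n : ℕ => (-1 : ℂ) ^ (n + 1) * v ^ n / n + v ^ n / n) ∘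
        (fun k : ℕ => 2 * k + 1)) k‖ = (2 : ℝ) * (1 / (2 * k + 1)) * ‖v‖ ^ (2 * k + 1) := by
    intro k
    have hodd : ((-1 : ℂ)) ^ (2 * k + 1 + 1) = 1 := Even.neg_one_pow ⟨k + 1, by ring⟩
    simp only [Function.comp_apply, hodd, one_mul]
    rw [← add_div, ← two_mul, norm_div, norm_mul]
    have hden : ‖((2 * k + 1 : ℕ) : ℂ)‖ = ((2 * k + 1 : ℕ) : ℝ) := Complex.norm_natCast _
    rw [hden, norm_pow]
    have h2 : ‖(2 : ℂ)‖ = 2 := by norm_num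
    rw [h2]
    push_cast
    ring
  have hnormsum : HasSum (fun k : ℕ =>
      ‖((fun n : ℕ => (-1 : ℂ) ^ (n + 1) * v ^ n / n + v ^ n / n) ∘
        (fun k : ℕ => 2 * k + 1)) k‖)
      (Real.log (1 + ‖v‖) - Real.log (1 - ‖v‖)) := by
    convert hR using 1
    exact funext hterm
  calc ‖L‖ = ‖Complex.log (1 + v) + -Complex.log (1 - v)‖ := by
        rw [hL]; rfl
    _ ≤ Real.log (1 + ‖v‖) - Real.log (1 - ‖v‖) := by
        rw [← hS'.tsum_eq]
        exact (norm_tsum_le_tsum_norm hnormsum.summable).trans (le_of_eq hnormsum.tsum_eq)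

/-- The sigmoid domain Δ_SG = {w : |Log(w/(2-w))| < 1}. -/
noncomputable def DeltaSG : Set ℂ := {w : ℂ | ‖Complex.log (w / (2 - w))‖ < 1}

theorem stmt_0 (a : ℝ)
    (ha1 : 2 / (1 + Real.exp 1) < a) (ha2 : a < 2 * Real.exp 1 / (1 + Real.exp 1)) :
    {w : ℂ | ‖w - (a : ℂ)‖ < (Real.exp 1 - 1) / (Real.exp 1 + 1) - |a - 1|}
      ⊆ DeltaSG := by
  intro w hw
  simp only [Set.mem_setOf_eq] at hw
  set e := Real.exp 1 with he
  have he1 : 1 < e := by rw [he]; linarith [Real.exp_one_gt_d9]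
  set v : ℂ := w - 1 with hv
  set t : ℝ := ‖v‖ with htdef
  have habs : ‖(a : ℂ) - 1‖ = |a - 1| := by
    rw [show ((a : ℂ) - 1) = ((a - 1 : ℝ) : ℂ) by push_cast; ring, Complex.norm_real, Real.norm_eq_abs]
  have ht : t < (e - 1) / (e + 1) := by
    have := norm_sub_le_norm_sub_add_norm_sub w (a : ℂ) 1
    calc t = ‖w - 1‖ := rfl
      _ ≤ ‖w - (a : ℂ)‖ + ‖(a : ℂ) - 1‖ := this
      _ = ‖w - (a : ℂ)‖ + |a - 1| := by rw [habs]
      _ < (e - 1) / (e + 1) := by linarith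
  have hr1 : (e - 1) / (e + 1) < 1 := by
    rw [div_lt_one (by linarith)]; linarith
  have ht1 : t < 1 := lt_trans ht hr1
  have ht0 : 0 ≤ t := norm_nonneg v
  have hwv : w / (2 - w) = (1 + v) / (1 - v) := by
    rw [hv]; ring_nf
  show ‖Complex.log (w / (2 - w))‖ < 1
  rw [hwv]
  refine lt_of_le_of_lt (aux_log_bound v ht1) ?_
  -- Real.log (1+t) - Real.log (1-t) < 1
  have h1t : (0 : ℝ) < 1 - t := by linarith
  have h1t' : (0 : ℝ) < 1 + t := by linarith
  have key : (1 + t) / (1 - t) < e := by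
    rw [div_lt_iff₀ h1t]
    have := (lt_div_iff₀ (by linarith : (0:ℝ) < e + 1)).mp ht
    nlinarith
  calc Real.log (1 + t) - Real.log (1 - t) = Real.log ((1 + t) / (1 - t)) := by
        rw [Real.log_div (by linarith) (by linarith)]
    _ < Real.log e := Real.log_lt_log (by positivity) key
    _ = 1 := by rw [he, Real.log_exp]
end

section
/- Let n ≥ 1 be an integer and let A, B be real numbers with 0 ≤ B < A ≤ 1. Let f be analytic on 𝔻 with f(0) = 0, f′(0) = 1 and f(z) ≠ 0 for z ∈ 𝔻 \ {0}, and suppose there is an analytic function ω on 𝔻 with |ω(z)| ≤ |z|^n for all z ∈ 𝔻 such that z f′(z)/f(z) = (1 + Aω(z))/(1 + Bω(z)) on 𝔻 (i.e. f ∈ S*_n[A,B]). Then for every z with 0 < |z| < min{1, ((e−1)/(A(1+e)−2B))^(1/n)} one has z f′(z)/f(z) ∈ Δ_SG. -/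
open Complex Metric

lemma artanh_bound (u : ℂ) (hu1 : ‖u‖ < 1) :
    ‖Complex.log (1 + u) - Complex.log (1 - u)‖
      ≤ Real.log (1 + ‖u‖) - Real.log (1 - ‖u‖) := by
  set t : ℝ := ‖u‖ with ht
  have ht0 : 0 ≤ t := norm_nonneg u
  have hnu : ‖u‖ < 1 := hu1
  have hnnu : ‖-u‖ < 1 := by simpa using hu1
  have h1 : HasSum (fun k : ℕ => u ^ k / k) (-Complex.log (1 - u)) :=
    Complex.hasSum_taylorSeries_neg_log hnu
  have h2 : HasSum (fun k : ℕ => (-u) ^ k / k) (-Complex.log (1 + u)) := by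
    have := Complex.hasSum_taylorSeries_neg_log (z := -u) hnnu
    simpa [sub_neg_eq_add] using this
  have hS : HasSum (fun k : ℕ => u ^ k / k - (-u) ^ k / k)
      (Complex.log (1 + u) - Complex.log (1 - u)) := by
    have h := h1.sub h2
    convert h using 1
    rfl
    ring
  -- real series
  have hr1 : HasSum (fun k : ℕ => t ^ k / k) (-Real.log (1 - t)) := by
    have hc : HasSum (fun k : ℕ => ((t : ℂ)) ^ k / k) (-Complex.log (1 - (t : ℂ))) :=
      Complex.hasSum_taylorSeries_neg_log
        (by rw [Complex.norm_real, Real.norm_eq_abs, _root_.abs_of_nonneg ht0]; exact hu1)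
    rw [← hasSum_ofReal]
    convert hc using 1 with k
    · push_cast; ring
    · rw [show ((1 : ℂ) - (t : ℂ)) = ((1 - t : ℝ) : ℂ) by push_cast; ring,
        ← Complex.ofReal_log (by linarith)]
      push_cast; ring
  have hr2 : HasSum (fun k : ℕ => (-t) ^ k / k) (-Real.log (1 + t)) := by
    have hc : HasSum (fun k : ℕ => ((-t : ℝ) : ℂ) ^ k / k) (-Complex.log (1 - ((-t : ℝ) : ℂ))) :=
      Complex.hasSum_taylorSeries_neg_log
        (by rw [Complex.norm_real, Real.norm_eq_abs, abs_neg, _root_.abs_of_nonneg ht0]; exact hu1)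
    rw [← hasSum_ofReal]
    convert hc using 1 with k
    · push_cast; ring
    · rw [show ((1 : ℂ) - ((-t : ℝ) : ℂ)) = ((1 + t : ℝ) : ℂ) by push_cast; ring,
        ← Complex.ofReal_log (by linarith)]
      push_cast; ring
  have ha : HasSum (fun k : ℕ => t ^ k / k - (-t) ^ k / k)
      (Real.log (1 + t) - Real.log (1 - t)) := by
    have h := hr1.sub hr2
    convert h using 1
    rfl
    ring
  -- pointwise bound
  have hbd : ∀ k : ℕ, ‖u ^ k / k - (-u) ^ k / k‖ ≤ t ^ k / k - (-t) ^ k / k := by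
    intro k
    rcases Nat.even_or_odd k with hk | hk
    · rw [hk.neg_pow u, hk.neg_pow t]
      simp
    · rw [hk.neg_pow u, hk.neg_pow t, neg_div, sub_neg_eq_add, neg_div, sub_neg_eq_add,
        ← add_div, ← add_div, norm_div, Complex.norm_natCast]
      have hkpos : (0 : ℝ) < k := by exact_mod_cast hk.pos
      gcongr
      calc ‖u ^ k + u ^ k‖ ≤ ‖u ^ k‖ + ‖u ^ k‖ := norm_add_le _ _
      _ = t ^ k + t ^ k := by rw [norm_pow]
  have hsn : Summable (fun k : ℕ => ‖u ^ k / k - (-u) ^ k / k‖) :=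
    Summable.of_nonneg_of_le (fun _ => norm_nonneg _) hbd ha.summable
  calc ‖Complex.log (1 + u) - Complex.log (1 - u)‖
      = ‖∑' k : ℕ, (u ^ k / k - (-u) ^ k / k)‖ := by rw [hS.tsum_eq]
    _ ≤ ∑' k : ℕ, ‖u ^ k / k - (-u) ^ k / k‖ := norm_tsum_le_tsum_norm hsn
    _ ≤ ∑' k : ℕ, (t ^ k / k - (-t) ^ k / k) := Summable.tsum_le_tsum hbd hsn ha.summable
    _ = Real.log (1 + t) - Real.log (1 - t) := ha.tsum_eq

lemma mem_DeltaSG_of (W : ℂ)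
    (hW : ‖W - 1‖ < (Real.exp 1 - 1) / (Real.exp 1 + 1)) : W ∈ DeltaSG := by
  have he : (2 : ℝ) < Real.exp 1 := by
    have := Real.exp_one_gt_d9; linarith
  set u : ℂ := W - 1 with hu
  have ht01 : (Real.exp 1 - 1) / (Real.exp 1 + 1) < 1 := by
    rw [div_lt_one (by linarith)]; linarith
  have hu1 : ‖u‖ < 1 := hW.trans ht01
  set t : ℝ := ‖u‖ with htdef
  have ht0 : 0 ≤ t := norm_nonneg u
  have hre : |u.re| ≤ t := Complex.abs_re_le_norm u
  have hre' := abs_le.mp hre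
  have hre1 : 0 < (1 + u).re := by simp only [Complex.add_re, Complex.one_re]; linarith
  have hre2 : 0 < (1 - u).re := by simp only [Complex.sub_re, Complex.one_re]; linarith
  have hne1 : (1 + u) ≠ 0 := fun h => by simp [h] at hre1
  have hne2 : (1 - u) ≠ 0 := fun h => by simp [h] at hre2
  set L : ℂ := Complex.log (1 + u) - Complex.log (1 - u) with hL
  have hexp : Complex.exp L = (1 + u) / (1 - u) := by
    rw [hL, Complex.exp_sub, Complex.exp_log hne1, Complex.exp_log hne2]
  have ha1 : |Complex.arg (1 + u)| < Real.pi / 2 :=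
    Complex.abs_arg_lt_pi_div_two_iff.mpr (Or.inl hre1)
  have ha2 : |Complex.arg (1 - u)| < Real.pi / 2 :=
    Complex.abs_arg_lt_pi_div_two_iff.mpr (Or.inl hre2)
  have ha1' := abs_lt.mp ha1
  have ha2' := abs_lt.mp ha2
  have him : L.im = Complex.arg (1 + u) - Complex.arg (1 - u) := by
    simp [hL, Complex.sub_im, Complex.log_im]
  have hlog : Complex.log ((1 + u) / (1 - u)) = L := by
    rw [← hexp, Complex.log_exp (by rw [him]; linarith) (by rw [him]; linarith [Real.pi_pos])]
  have hWu : W / (2 - W) = (1 + u) / (1 - u) := by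
    have : W = 1 + u := by rw [hu]; ring
    rw [this]; congr 1; ring
  show ‖Complex.log (W / (2 - W))‖ < 1
  rw [hWu, hlog]
  calc ‖L‖ ≤ Real.log (1 + t) - Real.log (1 - t) := artanh_bound u hu1
    _ < 1 := by
      rw [← Real.log_div (by linarith) (by linarith),
        Real.log_lt_iff_lt_exp (div_pos (by linarith) (by linarith)), div_lt_iff₀ (by linarith)]
      have hW' : t * (Real.exp 1 + 1) < Real.exp 1 - 1 :=
        (lt_div_iff₀ (by linarith)).mp hW
      nlinarith

theorem stmt_1 (n : ℕ) (hn : 1 ≤ n) (A B : ℝ)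
    (hB : 0 ≤ B) (hBA : B < A) (hA : A ≤ 1)
    (f ω : ℂ → ℂ)
    (hf : DifferentiableOn ℂ f (ball 0 1))
    (hf0 : f 0 = 0) (hf'0 : deriv f 0 = 1)
    (hfne : ∀ z ∈ ball (0 : ℂ) 1, z ≠ 0 → f z ≠ 0)
    (hω : DifferentiableOn ℂ ω (ball 0 1))
    (hωb : ∀ z ∈ ball (0 : ℂ) 1, ‖ω z‖ ≤ ‖z‖ ^ n)
    (heq : ∀ z ∈ ball (0 : ℂ) 1,
      z * deriv f z / f z = (1 + (A : ℂ) * ω z) / (1 + (B : ℂ) * ω z)) :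
    ∀ z ∈ ball (0 : ℂ) 1, 0 < ‖z‖ →
      ‖z‖ <
        min 1 (((Real.exp 1 - 1) / (A * (1 + Real.exp 1) - 2 * B)) ^ ((1 : ℝ) / n)) →
      z * deriv f z / f z ∈ DeltaSG := by
  intro z hz hz0 hzlt
  have he : (2 : ℝ) < Real.exp 1 := by have := Real.exp_one_gt_d9; linarith
  have hA0 : 0 < A := lt_of_le_of_lt hB hBA
  have hD : 0 < A * (1 + Real.exp 1) - 2 * B := by nlinarith
  have hz1 : ‖z‖ < 1 := lt_of_lt_of_le hzlt (min_le_left _ _)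
  set c : ℝ := (Real.exp 1 - 1) / (A * (1 + Real.exp 1) - 2 * B) with hc
  have hc0 : 0 < c := by apply div_pos <;> linarith
  have hzc : ‖z‖ ^ n < c := by
    have h := hzlt.trans_le (min_le_right _ _)
    have hpow := pow_lt_pow_left₀ h (norm_nonneg z) (by omega : n ≠ 0)
    have hn0 : (n : ℝ) ≠ 0 := Nat.cast_ne_zero.mpr (by omega)
    calc ‖z‖ ^ n < (c ^ ((1 : ℝ) / n)) ^ n := hpow
      _ = c := by
        rw [← Real.rpow_natCast (c ^ ((1 : ℝ) / n)) n, ← Real.rpow_mul hc0.le]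
        rw [show (1 : ℝ) / n * n = 1 by field_simp]
        exact Real.rpow_one c
  set x : ℝ := ‖ω z‖ with hx
  have hx0 : 0 ≤ x := norm_nonneg _
  have hxc : x < c := lt_of_le_of_lt (hωb z hz) hzc
  have hx1 : x < 1 := lt_of_le_of_lt (hωb z hz)
    (pow_lt_one₀ (norm_nonneg z) hz1 (by omega))
  have hBx : B * x < 1 := by nlinarith
  have hBabs : ‖(B : ℂ) * ω z‖ = B * x := by
    rw [norm_mul, Complex.norm_real, Real.norm_eq_abs, _root_.abs_of_nonneg hB]
  have hden : (0 : ℝ) < 1 - B * x := by linarith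
  have hdenC : 1 - B * x ≤ ‖1 + (B : ℂ) * ω z‖ := by
    have h := norm_add_le (1 + (B : ℂ) * ω z) (-((B : ℂ) * ω z))
    simp only [add_neg_cancel_right, norm_one, norm_neg] at h
    have : ‖(B : ℂ) * ω z‖ = B * x := hBabs
    rw [this] at h
    rw [show ‖1 + (B : ℂ) * ω z‖ = ‖1 + (B : ℂ) * ω z‖ from rfl]
    linarith
  have hneC : (1 + (B : ℂ) * ω z) ≠ 0 := by
    intro h
    rw [h, norm_zero] at hdenC
    linarith
  have hWeq := heq z hz
  rw [hWeq]
  apply mem_DeltaSG_of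
  have hsub : (1 + (A : ℂ) * ω z) / (1 + (B : ℂ) * ω z) - 1
      = (((A : ℝ) - B : ℝ) : ℂ) * ω z / (1 + (B : ℂ) * ω z) := by
    rw [div_sub_one hneC]; push_cast
    ring
  rw [hsub, norm_div, norm_mul, Complex.norm_real, Real.norm_eq_abs, _root_.abs_of_nonneg (by linarith : (0:ℝ) ≤ A - B)]
  have hxD : x * (A * (1 + Real.exp 1) - 2 * B) < Real.exp 1 - 1 :=
    (lt_div_iff₀ hD).mp hxc
  calc (A - B) * x / ‖1 + (B : ℂ) * ω z‖
      ≤ (A - B) * x / (1 - B * x) := by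
        apply div_le_div_of_nonneg_left (by nlinarith) hden hdenC
    _ < (Real.exp 1 - 1) / (Real.exp 1 + 1) := by
        rw [div_lt_div_iff₀ hden (by linarith)]
        nlinarith
end

section
/- Let 0 ≤ α < 1 and let f be analytic on 𝔻 with f(0) = 0, f′(0) = 1 and f(z) ≠ 0 for z ∈ 𝔻 \ {0}, and suppose there is a Schwarz function ω such that z f′(z)/f(z) = 1 + ω(z)/(1 − α ω(z)²) on 𝔻 (i.e. f ∈ BS*(α)). Then for every z with 0 < |z| < 2(e−1)/((1+e) + √((1+e)² + 4α(e−1)²)) one has z f′(z)/f(z) ∈ Δ_SG. -/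
open Complex Metric

/-- A Schwarz function: analytic on 𝔻, fixing 0, mapping 𝔻 into 𝔻. -/
def IsSchwarz (ω : ℂ → ℂ) : Prop :=
  DifferentiableOn ℂ ω (Metric.ball 0 1) ∧ ω 0 = 0 ∧
    ∀ z ∈ Metric.ball (0 : ℂ) 1, ‖ω z‖ < 1

private lemma sinh_le_mul_cosh {w : ℝ} (hw : 0 ≤ w) : Real.sinh w ≤ w * Real.cosh w := by
  have key : MonotoneOn (fun x : ℝ => x * Real.cosh x - Real.sinh x) (Set.Ici 0) := by
    apply monotoneOn_of_deriv_nonneg (convex_Ici 0)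
    · exact ((continuous_id.mul Real.continuous_cosh).sub Real.continuous_sinh).continuousOn
    · intro x hx
      exact (((hasDerivAt_id x).mul (Real.hasDerivAt_cosh x)).sub
        (Real.hasDerivAt_sinh x)).differentiableAt.differentiableWithinAt
    · intro x hx
      rw [interior_Ici] at hx
      have h : HasDerivAt (fun x : ℝ => x * Real.cosh x - Real.sinh x)
          (1 * Real.cosh x + x * Real.sinh x - Real.cosh x) x :=
        ((hasDerivAt_id x).mul (Real.hasDerivAt_cosh x)).sub (Real.hasDerivAt_sinh x)
      rw [h.deriv]
      have : 0 ≤ x * Real.sinh x := mul_nonneg hx.le (Real.sinh_nonneg_iff.2 hx.le)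
      linarith
  have h0 : (0:ℝ) ∈ Set.Ici (0:ℝ) := Set.self_mem_Ici
  have := key h0 (Set.mem_Ici.2 hw) hw
  simp at this
  linarith

private lemma keyK {s : ℝ} (h0 : 0 ≤ s) (h1 : s ≤ 1) :
    Real.cosh 1 * Real.cos (Real.sqrt (1 - s^2)) ≤ Real.cosh s := by
  set G : ℝ → ℝ := fun x => Real.log (Real.cosh (Real.sqrt (s^2 + x))) +
    Real.log (Real.cos (Real.sqrt x)) with hG
  have hs2 : s^2 ≤ 1 := by nlinarith
  have hcospos : ∀ x ∈ Set.Icc (0:ℝ) (1 - s^2), 0 < Real.cos (Real.sqrt x) := by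
    intro x hx
    apply Real.cos_pos_of_le_one
    rw [_root_.abs_of_nonneg (Real.sqrt_nonneg x)]
    calc Real.sqrt x ≤ Real.sqrt 1 := Real.sqrt_le_sqrt (by nlinarith [hx.2, sq_nonneg s])
      _ = 1 := Real.sqrt_one
  have hanti : AntitoneOn G (Set.Icc 0 (1 - s^2)) := by
    have hderiv : ∀ x ∈ Set.Ioo (0:ℝ) (1 - s^2),
        HasDerivAt G (Real.sinh (Real.sqrt (s^2+x)) * (1/(2*Real.sqrt (s^2+x))) / Real.cosh (Real.sqrt (s^2+x))
          + (-Real.sin (Real.sqrt x) * (1/(2*Real.sqrt x)) / Real.cos (Real.sqrt x))) x := by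
      intro x hx
      have hx0 : (0:ℝ) < x := hx.1
      have hsx : (0:ℝ) < s^2 + x := by positivity
      have h1 : HasDerivAt (fun x : ℝ => s^2 + x) 1 x := (hasDerivAt_id x).const_add (s^2)
      have h2 : HasDerivAt (fun x : ℝ => Real.sqrt (s^2 + x)) (1/(2*Real.sqrt (s^2+x))) x := by
        simpa using h1.sqrt hsx.ne'
      have h3 := (h2.cosh).log (Real.cosh_pos _).ne'
      have h4 : HasDerivAt (fun x : ℝ => Real.sqrt x) (1/(2*Real.sqrt x)) x :=
        Real.hasDerivAt_sqrt hx0.ne'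
      have hcx : Real.cos (Real.sqrt x) ≠ 0 :=
        (hcospos x ⟨hx0.le, hx.2.le⟩).ne'
      have h5 := (h4.cos).log hcx
      exact h3.add h5
    apply antitoneOn_of_deriv_nonpos (convex_Icc _ _)
    · apply ContinuousOn.add
      · apply ContinuousOn.log
        · exact (Real.continuous_cosh.comp ((continuous_const.add continuous_id).sqrt)).continuousOn
        · exact fun x hx => (Real.cosh_pos _).ne'
      · apply ContinuousOn.log
        · exact (Real.continuous_cos.comp Real.continuous_sqrt).continuousOn
        · exact fun x hx => (hcospos x hx).ne'
    · intro x hx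
      rw [interior_Icc] at hx
      exact (hderiv x hx).differentiableAt.differentiableWithinAt
    · intro x hx
      rw [interior_Icc] at hx
      rw [(hderiv x hx).deriv]
      have hx0 : (0:ℝ) < x := hx.1
      have hy : (0:ℝ) < Real.sqrt x := Real.sqrt_pos.2 hx0
      have hw : (0:ℝ) < Real.sqrt (s^2 + x) := Real.sqrt_pos.2 (by positivity)
      have hcx : (0:ℝ) < Real.cos (Real.sqrt x) := hcospos x ⟨hx0.le, hx.2.le⟩
      have hchw : (0:ℝ) < Real.cosh (Real.sqrt (s^2+x)) := Real.cosh_pos _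
      have hA : Real.sinh (Real.sqrt (s^2+x)) * (1/(2*Real.sqrt (s^2+x))) / Real.cosh (Real.sqrt (s^2+x)) ≤ 1/2 := by
        rw [div_le_iff₀ hchw, mul_one_div,
          div_le_iff₀ (show (0:ℝ) < 2*Real.sqrt (s^2+x) by linarith)]
        nlinarith [sinh_le_mul_cosh hw.le]
      have hB : (1:ℝ)/2 ≤ Real.sin (Real.sqrt x) * (1/(2*Real.sqrt x)) / Real.cos (Real.sqrt x) := by
        rw [le_div_iff₀ hcx]
        have hlt : Real.sqrt x < Real.pi/2 := by
          calc Real.sqrt x ≤ 1 := by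
                rw [show (1:ℝ) = Real.sqrt 1 by rw [Real.sqrt_one]]
                exact Real.sqrt_le_sqrt (by nlinarith [hx.2, sq_nonneg s])
            _ < Real.pi/2 := by linarith [Real.pi_gt_three]
        have htan := Real.lt_tan hy hlt
        rw [Real.tan_eq_sin_div_cos, lt_div_iff₀ hcx] at htan
        rw [mul_one_div, le_div_iff₀ (show (0:ℝ) < 2*Real.sqrt x by linarith)]
        nlinarith [htan]
      have hneg : -Real.sin (Real.sqrt x) * (1/(2*Real.sqrt x)) / Real.cos (Real.sqrt x)
          = -(Real.sin (Real.sqrt x) * (1/(2*Real.sqrt x)) / Real.cos (Real.sqrt x)) := by ring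
      rw [hneg]
      linarith
  have hmem0 : (0:ℝ) ∈ Set.Icc (0:ℝ) (1 - s^2) := ⟨le_refl _, by linarith⟩
  have hmem1 : (1 - s^2) ∈ Set.Icc (0:ℝ) (1 - s^2) := ⟨by linarith, le_refl _⟩
  have := hanti hmem0 hmem1 (by linarith)
  have e0 : G 0 = Real.log (Real.cosh s) := by
    simp [hG, Real.sqrt_zero, Real.sqrt_sq h0]
  have e1 : G (1 - s^2) = Real.log (Real.cosh 1) + Real.log (Real.cos (Real.sqrt (1 - s^2))) := by
    simp [hG, show s^2 + (1 - s^2) = 1 by ring, Real.sqrt_one]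
  rw [e0, e1] at this
  have hc1 : (0:ℝ) < Real.cos (Real.sqrt (1 - s^2)) := hcospos _ hmem1
  calc Real.cosh 1 * Real.cos (Real.sqrt (1 - s^2))
      = Real.exp (Real.log (Real.cosh 1) + Real.log (Real.cos (Real.sqrt (1 - s^2)))) := by
        rw [Real.exp_add, Real.exp_log (Real.cosh_pos _), Real.exp_log hc1]
    _ ≤ Real.exp (Real.log (Real.cosh s)) := Real.exp_le_exp.2 this
    _ = Real.cosh s := Real.exp_log (Real.cosh_pos _)

private lemma keyR {s θ : ℝ} (hθ : |θ| < Real.pi/2) (h : Real.cosh s < Real.cosh 1 * Real.cos θ) :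
    s^2 + θ^2 < 1 := by
  rw [← Real.cosh_abs] at h
  rw [← Real.cos_abs] at h
  set s' := |s| with hs'
  set θ' := |θ| with hθ'
  have hs'0 : 0 ≤ s' := abs_nonneg s
  have hθ'0 : 0 ≤ θ' := abs_nonneg θ
  have hs2 : s^2 = s'^2 := (_root_.sq_abs s).symm
  have hθ2 : θ^2 = θ'^2 := (_root_.sq_abs θ).symm
  rw [hs2, hθ2]
  have hcos1 : Real.cos θ' ≤ 1 := Real.cos_le_one _
  have hlt1 : Real.cosh s' < Real.cosh 1 := by
    nlinarith [Real.cosh_pos (1:ℝ)]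
  have hs'1 : s' < 1 := by
    have := Real.cosh_lt_cosh.1 hlt1
    rw [_root_.abs_abs, _root_.abs_one] at this
    exact this
  by_contra hcon
  push_neg at hcon
  have hθ₀ : Real.sqrt (1 - s'^2) ≤ θ' := by
    rw [show θ' = Real.sqrt (θ'^2) by rw [Real.sqrt_sq hθ'0]]
    exact Real.sqrt_le_sqrt (by nlinarith)
  have hcosle : Real.cos θ' ≤ Real.cos (Real.sqrt (1 - s'^2)) :=
    Real.cos_le_cos_of_nonneg_of_le_pi (Real.sqrt_nonneg _)
      (by linarith [Real.pi_pos]) hθ₀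
  have hK := keyK hs'0 hs'1.le
  nlinarith [Real.cosh_pos (1:ℝ)]

set_option maxHeartbeats 2000000 in
private lemma disk_subset {w : ℂ} (hw : ‖w - 1‖ < (Real.exp 1 - 1)/(Real.exp 1 + 1)) :
    ‖Complex.log (w / (2 - w))‖ < 1 := by
  set E := Real.exp 1 with hE
  have hE1 : 1 < E := by
    rw [hE]; calc (1:ℝ) < 2.7182818283 := by norm_num
      _ < Real.exp 1 := Real.exp_one_gt_d9
  have hw0 : w ≠ 0 := by
    intro h; rw [h] at hw; simp at hw
    rw [lt_div_iff₀ (by linarith : (0:ℝ) < E+1)] at hw; linarith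
  have hw2 : (2:ℂ) - w ≠ 0 := by
    intro h
    have h2 : w = 2 := by linear_combination -h
    rw [h2] at hw
    norm_num at hw
    rw [lt_div_iff₀ (by linarith : (0:ℝ) < E+1)] at hw; linarith
  set v := w / (2 - w) with hv
  have hv1 : v + 1 = 2 / (2 - w) := by
    rw [hv]; field_simp; ring
  have hv1ne : v + 1 ≠ 0 := by
    rw [hv1]; simp [hw2]
  have hvne : v ≠ 0 := div_ne_zero hw0 hw2
  have hkey : w - 1 = (v - 1) / (v + 1) := by
    rw [hv1, hv]
    field_simp
    ring
  have habs : ‖v - 1‖ < (E - 1)/(E + 1) * ‖v + 1‖ := by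
    have h' := hw
    rw [hkey, norm_div, div_lt_iff₀ (norm_pos_iff.2 hv1ne)] at h'
    linarith [h']
  have h2 : (‖v-1‖)^2 < ((E - 1)/(E + 1))^2 * (‖v+1‖)^2 := by
    rw [← mul_pow]
    exact pow_lt_pow_left₀ habs (norm_nonneg _) (by norm_num)
  have e1 : (‖v-1‖)^2 = (v.re-1)^2 + v.im^2 := by
    rw [Complex.sq_norm, Complex.normSq_apply]; simp; ring
  have e2 : (‖v+1‖)^2 = (v.re+1)^2 + v.im^2 := by
    rw [Complex.sq_norm, Complex.normSq_apply]; simp; ring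
  have eV : (‖v‖)^2 = v.re^2 + v.im^2 := by
    rw [Complex.sq_norm, Complex.normSq_apply]; ring
  rw [e1, e2, div_pow, div_mul_eq_mul_div, lt_div_iff₀ (by positivity : (0:ℝ) < (E+1)^2)] at h2
  have hsq : E * ((‖v‖)^2 + 1) < (E^2 + 1) * v.re := by
    rw [eV]; nlinarith [h2]
  have hre : 0 < v.re := by
    nlinarith [sq_nonneg v.re, sq_nonneg v.im, norm_nonneg v, sq_nonneg (‖v‖)]
  have hθ : |Complex.arg v| < Real.pi / 2 :=
    Complex.abs_arg_lt_pi_div_two_iff.2 (Or.inl hre)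
  set R := ‖v‖ with hR'
  have hR : 0 < R := norm_pos_iff.2 hvne
  have hreR : v.re = R * Real.cos (Complex.arg v) := by
    rw [Complex.cos_arg hvne, mul_div_cancel₀]
    exact hR.ne'
  set θ := Complex.arg v with hθ'
  set s := Real.log R with hs'
  have hexps : Real.exp s = R := Real.exp_log hR
  have hcoshs : Real.cosh s = (R + R⁻¹)/2 := by
    rw [Real.cosh_eq, Real.exp_neg, hexps]
  have hcosh1 : Real.cosh 1 = (E + E⁻¹)/2 := by
    rw [Real.cosh_eq, Real.exp_neg, hE]
  have hmain : Real.cosh s < Real.cosh 1 * Real.cos θ := by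
    rw [hcoshs, hcosh1]
    rw [hreR] at hsq
    have hRinv : R * R⁻¹ = 1 := mul_inv_cancel₀ hR.ne'
    have hEinv : E * E⁻¹ = 1 := mul_inv_cancel₀ (by linarith)
    nlinarith [mul_pos (show (0:ℝ) < E by linarith) hR, hsq, hRinv, hEinv]
  have hfin := keyR hθ hmain
  have heq2 : (‖Complex.log v‖)^2 = s^2 + θ^2 := by
    rw [Complex.sq_norm, Complex.normSq_apply, Complex.log_re, Complex.log_im]
    ring
  nlinarith [norm_nonneg (Complex.log v), heq2, hfin]

theorem stmt_3 (α : ℝ) (hα0 : 0 ≤ α) (hα1 : α < 1)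
    (f ω : ℂ → ℂ)
    (hf : DifferentiableOn ℂ f (ball 0 1))
    (hf0 : f 0 = 0) (hf'0 : deriv f 0 = 1)
    (hfne : ∀ z ∈ ball (0 : ℂ) 1, z ≠ 0 → f z ≠ 0)
    (hω : IsSchwarz ω)
    (heq : ∀ z ∈ ball (0 : ℂ) 1,
      z * deriv f z / f z = 1 + ω z / (1 - (α : ℂ) * (ω z) ^ 2)) :
    ∀ z ∈ ball (0 : ℂ) 1, 0 < ‖z‖ →
      ‖z‖ <
        2 * (Real.exp 1 - 1) /
          ((1 + Real.exp 1) +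
            Real.sqrt ((1 + Real.exp 1) ^ 2 + 4 * α * (Real.exp 1 - 1) ^ 2)) →
      z * deriv f z / f z ∈ DeltaSG := by
  intro z hz hzpos hzr
  obtain ⟨hωd, hω0, hωlt⟩ := hω
  have hmaps : Set.MapsTo ω (ball 0 1) (ball 0 1) := fun x hx =>
    mem_ball_zero_iff.2 (by simpa using hωlt x hx)
  have hzb : ‖z‖ < 1 := by simpa using mem_ball_zero_iff.1 hz
  have hsch : ‖ω z‖ ≤ ‖z‖ :=
    Complex.norm_le_norm_of_mapsTo_ball hωd (hmaps.mono_right ball_subset_closedBall) hω0 hzb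
  set E := Real.exp 1 with hE
  have hE1 : 1 < E := by
    rw [hE]; calc (1:ℝ) < 2.7182818283 := by norm_num
      _ < Real.exp 1 := Real.exp_one_gt_d9
  set S := Real.sqrt ((1 + E) ^ 2 + 4 * α * (E - 1) ^ 2) with hS
  have hS2 : S^2 = (1+E)^2 + 4*α*(E-1)^2 := Real.sq_sqrt (by positivity)
  have hSA : 1 + E ≤ S := by
    have h := Real.sqrt_le_sqrt (show (1+E)^2 ≤ (1+E)^2+4*α*(E-1)^2 by nlinarith)
    rw [Real.sqrt_sq (by linarith : (0:ℝ) ≤ 1+E)] at h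
    exact h
  have h1 : (0:ℝ) < (1+E) + S := by linarith
  have h2 : (0:ℝ) < E + 1 := by linarith
  set c := (E-1)/(E+1) with hc
  set r := 2 * (E - 1) / (1 + E + S) with hr
  have hc0 : 0 < c := div_pos (by linarith) h2
  have hr0 : 0 < r := div_pos (by linarith) (by linarith)
  have hroot : α*c*r^2 + r = c := by
    have e1 : (E-1)/(E+1) - 2*(E-1)/((1+E)+S) = (E-1)*(S-(1+E))/((E+1)*((1+E)+S)) := by
      field_simp
      ring
    have e2 : S - (1+E) = 4*α*(E-1)^2/((1+E)+S) := by
      rw [eq_div_iff h1.ne']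
      linear_combination hS2
    have key : (E-1)/(E+1) - 2*(E-1)/((1+E)+S)
        = α*((E-1)/(E+1))*(2*(E-1)/((1+E)+S))^2 := by
      rw [e1, e2]
      field_simp
      ring
    have hre : r = 2*(E-1)/((1+E)+S) := by rw [hr]
    rw [hc, hre]
    linarith [key]
  set t := ‖ω z‖ with htdef
  have ht0 : 0 ≤ t := norm_nonneg _
  have htr : t < r := lt_of_le_of_lt hsch hzr
  have hquad : α*c*t^2 + t < c := by
    have ht2 : t^2 ≤ r^2 := by nlinarith
    have h' : α*c*t^2 ≤ α*c*r^2 :=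
      mul_le_mul_of_nonneg_left ht2 (mul_nonneg hα0 hc0.le)
    calc α*c*t^2 + t ≤ α*c*r^2 + t := by linarith
      _ < α*c*r^2 + r := by linarith
      _ = c := hroot
  have hden : 0 < 1 - α*t^2 := by nlinarith [hc0, ht0, hquad]
  have habs1 : 1 - α*t^2 ≤ ‖1 - (α:ℂ)*(ω z)^2‖ := by
    have hnorm : ‖(1:ℂ)‖ - ‖(α:ℂ)*(ω z)^2‖ ≤ ‖(1:ℂ) - (α:ℂ)*(ω z)^2‖ :=
      norm_sub_norm_le _ _
    have e3 : ‖(α:ℂ)*(ω z)^2‖ = α*t^2 := by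
      rw [norm_mul, norm_pow, Complex.norm_real, Real.norm_eq_abs, _root_.abs_of_nonneg hα0]
    rw [norm_one, e3] at hnorm
    exact hnorm
  have hdpos : 0 < ‖1 - (α:ℂ)*(ω z)^2‖ := lt_of_lt_of_le hden habs1
  have hfrac : ‖ω z / (1 - (α:ℂ)*(ω z)^2)‖ < c := by
    rw [norm_div, div_lt_iff₀ hdpos]
    calc t < c * (1 - α*t^2) := by nlinarith [hquad]
      _ ≤ c * ‖1 - (α:ℂ)*(ω z)^2‖ := by nlinarith [habs1, hc0]
  rw [heq z hz]
  show ‖Complex.log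
      ((1 + ω z / (1 - (α:ℂ)*(ω z)^2)) / (2 - (1 + ω z / (1 - (α:ℂ)*(ω z)^2))))‖ < 1
  apply disk_subset
  simpa using hfrac
end

section
/- Let n ≥ 1 be an integer and 0 ≤ α < 1. Let g be analytic on 𝔻 with g(0) = 0, g′(0) = 1 and g(z) ≠ 0 for z ∈ 𝔻 \ {0}, such that the function z ↦ z g′(z)/g(z) (extended by the value 1 at 0) belongs to P_n(α) (i.e. g is starlike of order α in A_n). Let h ∈ P_n and define f(z) = g(z)·h(z) on 𝔻 (so f/g ∈ P_n, i.e. f is close-to-starlike of type α, f ∈ CS*_n(α)). Then for every z with 0 < |z| < ((e−1)/((1+e)(1+n−α) + √((e+1)²(1+n−α)² + (e−1)((1−2α)(e+1) + 2e))))^(1/n) one has z f′(z)/f(z) ∈ Δ_SG. -/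
open Complex Metric Set Filter FormalMultilinearSeries

/-- The Carathéodory-type class P_n(α): analytic p on 𝔻 with p(0) = 1,
derivatives of orders 1,…,n−1 vanishing at 0, and Re p > α on 𝔻. -/
def CaraPn (n : ℕ) (α : ℝ) (p : ℂ → ℂ) : Prop :=
  DifferentiableOn ℂ p (Metric.ball 0 1) ∧ p 0 = 1 ∧
    (∀ k : ℕ, 1 ≤ k → k ≤ n - 1 → iteratedDeriv k p 0 = 0) ∧
    ∀ z ∈ Metric.ball (0 : ℂ) 1, α < (p z).re

set_option linter.unusedVariables false
set_option linter.unreachableTactic false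
set_option linter.unnecessarySeqFocus false
set_option linter.unusedTactic false
set_option linter.unnecessarySimpa false

noncomputable def Complex.abs : AbsoluteValue ℂ ℝ where
  toFun z := ‖z‖
  map_mul' := norm_mul
  nonneg' := norm_nonneg
  eq_zero' _ := norm_eq_zero
  add_le' := norm_add_le

@[simp] lemma Complex.abs_apply (z : ℂ) : Complex.abs z = ‖z‖ := rfl
lemma Complex.abs_conj (z : ℂ) : Complex.abs ((starRingEnd ℂ) z) = Complex.abs z := by simp
lemma Complex.abs_ofReal (x : ℝ) : Complex.abs (x : ℂ) = |x| := by simp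
lemma Complex.abs_natCast (n : ℕ) : Complex.abs (n : ℂ) = n := by simp
lemma Complex.sq_abs (z : ℂ) : Complex.abs z ^ 2 = Complex.normSq z := by simp [Complex.sq_norm]
lemma Complex.abs_im_le_abs (z : ℂ) : |z.im| ≤ Complex.abs z := Complex.abs_im_le_norm z
lemma Complex.re_le_abs (z : ℂ) : z.re ≤ Complex.abs z := Complex.re_le_norm z
lemma Complex.norm_eq_abs (z : ℂ) : ‖z‖ = Complex.abs z := rfl


lemma mob_normSq (a u : ℂ) :
    Complex.normSq (1 - (starRingEnd ℂ) a * u) - Complex.normSq (u - a)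
      = (1 - Complex.normSq a) * (1 - Complex.normSq u) := by
  simp only [Complex.normSq_apply, Complex.sub_re, Complex.sub_im, Complex.mul_re,
    Complex.mul_im, Complex.one_re, Complex.one_im, Complex.conj_re, Complex.conj_im]
  ring

lemma mob_denom_ne {a u : ℂ} (ha : Complex.abs a < 1) (hu : Complex.abs u < 1) :
    1 - (starRingEnd ℂ) a * u ≠ 0 := by
  intro hc
  have h1 : Complex.abs ((starRingEnd ℂ) a * u) < 1 := by
    rw [map_mul, Complex.abs_conj]
    nlinarith [Complex.abs.nonneg a, Complex.abs.nonneg u]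
  have : (1 : ℂ) = (starRingEnd ℂ) a * u := by linear_combination hc
  rw [← this] at h1; simp at h1

lemma mob_abs_lt {a u : ℂ} (ha : Complex.abs a < 1) (hu : Complex.abs u < 1) :
    Complex.abs ((u - a) / (1 - (starRingEnd ℂ) a * u)) < 1 := by
  have hne := mob_denom_ne ha hu
  have hpos : 0 < Complex.abs (1 - (starRingEnd ℂ) a * u) := by
    simpa [Complex.abs.pos_iff] using hne
  rw [map_div₀, div_lt_one hpos]
  have h2 : Complex.normSq (u - a) < Complex.normSq (1 - (starRingEnd ℂ) a * u) := by
    have := mob_normSq a u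
    have h3 : Complex.normSq a < 1 := by
      rw [← Complex.sq_abs]; nlinarith [Complex.abs.nonneg a]
    have h4 : Complex.normSq u < 1 := by
      rw [← Complex.sq_abs]; nlinarith [Complex.abs.nonneg u]
    nlinarith
  rw [← Complex.sq_abs, ← Complex.sq_abs] at h2
  have := Complex.abs.nonneg (u - a)
  nlinarith


lemma coeff_eq_zero_of_iteratedDeriv {u : ℂ → ℂ} {p : FormalMultilinearSeries ℂ ℂ ℂ}
    (hp : HasFPowerSeriesAt u p 0) {k : ℕ} (hk : iteratedDeriv k u 0 = 0) : p.coeff k = 0 := by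
  obtain ⟨r, hr⟩ := hp
  have h1 := hr.factorial_smul (y := (1 : ℂ)) k
  rw [← iteratedDeriv_eq_iteratedFDeriv, hk] at h1
  have h2 : (p k fun _ => (1:ℂ)) = p.coeff k := rfl
  rw [h2, smul_eq_zero] at h1
  rcases h1 with h1 | h1
  · exact absurd h1 (Nat.factorial_ne_zero k)
  · exact h1

-- global factorization of an n-fold zero at the origin
lemma factor_out (n : ℕ) (u : ℂ → ℂ) (hu : DifferentiableOn ℂ u (ball 0 1))
    (h0 : ∀ k < n, iteratedDeriv k u 0 = 0) :
    ∃ φ : ℂ → ℂ, DifferentiableOn ℂ φ (ball 0 1) ∧ ∀ z ∈ ball (0:ℂ) 1, u z = z ^ n * φ z := by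
  have hmem : ball (0:ℂ) 1 ∈ nhds (0:ℂ) := isOpen_ball.mem_nhds (by simp)
  have hA : AnalyticAt ℂ u 0 := (hu.analyticOnNhd isOpen_ball) 0 (by simp)
  obtain ⟨p, hp⟩ := hA
  -- iterated dslope
  set v : ℕ → (ℂ → ℂ) := fun k => (Function.swap dslope 0)^[k] u with hv
  have hdiff : ∀ k, DifferentiableOn ℂ (v k) (ball 0 1) := by
    intro k
    induction k with
    | zero => exact hu
    | succ k ih =>
      have : v (k+1) = dslope (v k) 0 := by
        rw [hv]; simp [Function.iterate_succ_apply', Function.swap]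
      rw [this]
      exact (differentiableOn_dslope hmem).mpr ih
  have hv0 : ∀ k, v k 0 = p.coeff k := by
    intro k
    have h1 : HasFPowerSeriesAt (v k) (fslope^[k] p) 0 :=
      hp.has_fpower_series_iterate_dslope_fslope k
    have h2 := h1.coeff_zero (fun _ => (1:ℂ))
    have h3 : (fslope^[k] p).coeff 0 = p.coeff k := by
      rw [coeff_iterate_fslope]; simp
    rw [← h3, ← h2]; rfl
  have hcoeff : ∀ k < n, p.coeff k = 0 := fun k hk =>
    coeff_eq_zero_of_iteratedDeriv hp (h0 k hk)
  have hid : ∀ k, k ≤ n → ∀ z ∈ ball (0:ℂ) 1, u z = z ^ k * v k z := by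
    intro k
    induction k with
    | zero => intro _ z _; simp [hv]
    | succ k ih =>
      intro hkn z hz
      have hk : k < n := Nat.lt_of_succ_le hkn
      rcases eq_or_ne z 0 with rfl | hzne
      · have hu0 : u 0 = 0 := by
          simpa using h0 0 (Nat.lt_of_lt_of_le (Nat.succ_pos k) hkn)
        simp [hu0]
      · have hvk0 : v k 0 = 0 := by rw [hv0]; exact hcoeff k hk
        have hstep : v (k+1) z = v k z / z := by
          have : v (k+1) = dslope (v k) 0 := by
            rw [hv]; simp [Function.iterate_succ_apply', Function.swap]
          rw [this, dslope_of_ne _ hzne, slope_def_field, hvk0]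
          simp [div_eq_mul_inv]
        rw [hstep, ih (le_of_lt hk) z hz, pow_succ]
        field_simp
  exact ⟨v n, hdiff n, hid n le_rfl⟩


-- maximum modulus: |φ| ≤ 1 when z^n φ z is bounded by 1
lemma phi_bound {φ : ℂ → ℂ} (hφ : DifferentiableOn ℂ φ (ball 0 1)) (n : ℕ)
    (hb : ∀ ζ ∈ ball (0:ℂ) 1, Complex.abs (ζ ^ n * φ ζ) < 1) :
    ∀ z ∈ ball (0:ℂ) 1, Complex.abs (φ z) ≤ 1 := by
  intro z hz
  rw [mem_ball_zero_iff] at hz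
  have key : ∀ ρ : ℝ, ρ ∈ Ioo (Complex.abs z) 1 → Complex.abs (φ z) ≤ (ρ ^ n)⁻¹ := by
    intro ρ hρ
    obtain ⟨hρ1, hρ2⟩ := hρ
    have hρ0 : 0 < ρ := lt_of_le_of_lt (Complex.abs.nonneg z) hρ1
    have hcl : closedBall (0:ℂ) ρ ⊆ ball 0 1 := by
      intro x hx; rw [mem_closedBall_zero_iff] at hx; rw [mem_ball_zero_iff]
      exact lt_of_le_of_lt hx hρ2
    have hdc : DiffContOnCl ℂ φ (ball 0 ρ) := by
      constructor
      · exact hφ.mono (fun x hx => by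
          rw [mem_ball_zero_iff] at hx ⊢; exact lt_of_lt_of_le hx (le_of_lt hρ2))
      · rw [closure_ball (0:ℂ) (ne_of_gt hρ0)]
        exact (hφ.continuousOn).mono hcl
    refine Complex.norm_le_of_forall_mem_frontier_norm_le (isBounded_ball) hdc ?_ ?_
    · intro x hx
      rw [frontier_ball (0:ℂ) (ne_of_gt hρ0)] at hx
      rw [mem_sphere_zero_iff_norm] at hx
      have hx1 : x ∈ ball (0:ℂ) 1 := by rw [mem_ball_zero_iff, hx]; exact hρ2
      have h2 := hb x hx1
      rw [map_mul, map_pow] at h2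
      have hxa : Complex.abs x = ρ := hx
      rw [hxa] at h2
      have hρn : (0:ℝ) < ρ ^ n := by positivity
      rw [norm_eq_abs, ← one_div, le_div_iff₀ hρn]
      nlinarith [Complex.abs.nonneg (φ x)]
    · rw [closure_ball (0:ℂ) (ne_of_gt hρ0), mem_closedBall_zero_iff]
      exact le_of_lt hρ1
  -- pass to the limit ρ → 1⁻
  have hT : Tendsto (fun ρ : ℝ => (ρ ^ n)⁻¹) (nhdsWithin 1 (Iio 1)) (nhds 1) := by
    have : Tendsto (fun ρ : ℝ => (ρ ^ n)⁻¹) (nhds 1) (nhds ((1 ^ n)⁻¹ : ℝ)) := by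
      apply Tendsto.inv₀
      · exact (continuous_pow n).tendsto 1
      · simp
    simpa using this.mono_left nhdsWithin_le_nhds
  refine ge_of_tendsto hT ?_
  filter_upwards [Ioo_mem_nhdsLT_of_mem (⟨hz, le_refl 1⟩ : (1:ℝ) ∈ Ioc (Complex.abs z) 1)]
    with ρ hρ using key ρ hρ


lemma schwarz_pick {φ : ℂ → ℂ} (hφ : DifferentiableOn ℂ φ (ball 0 1))
    (hb : ∀ z ∈ ball (0:ℂ) 1, Complex.abs (φ z) < 1) {a : ℂ} (ha : a ∈ ball (0:ℂ) 1) :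
    Complex.abs (deriv φ a) * (1 - (Complex.abs a) ^ 2) ≤ 1 - (Complex.abs (φ a)) ^ 2 := by
  have haa : Complex.abs a < 1 := mem_ball_zero_iff.mp ha
  have hna : Complex.abs (-a) < 1 := by simpa using haa
  set W := φ a with hWdef
  have hW : Complex.abs W < 1 := hb a ha
  set M : ℂ → ℂ := fun ζ => (ζ - (-a)) / (1 - (starRingEnd ℂ) (-a) * ζ) with hMdef
  have hM : ∀ ζ ∈ ball (0:ℂ) 1, M ζ ∈ ball (0:ℂ) 1 := by
    intro ζ hζ
    rw [mem_ball_zero_iff]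
    exact mob_abs_lt hna (mem_ball_zero_iff.mp hζ)
  have hM0 : M 0 = a := by simp [hMdef]
  set F : ℂ → ℂ := fun ζ => (φ (M ζ) - W) / (1 - (starRingEnd ℂ) W * φ (M ζ)) with hFdef
  -- differentiability of F on the ball
  have hMdiff : ∀ ζ ∈ ball (0:ℂ) 1, DifferentiableAt ℂ M ζ := by
    intro ζ hζ
    apply DifferentiableAt.div
    · exact (differentiableAt_id.sub_const _)
    · exact (differentiableAt_const _).sub ((differentiableAt_const _).mul differentiableAt_id)
    · exact mob_denom_ne hna (mem_ball_zero_iff.mp hζ)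
  have hFdiff : DifferentiableOn ℂ F (ball 0 1) := by
    intro ζ hζ
    have h1 : DifferentiableAt ℂ (fun ζ => φ (M ζ)) ζ :=
      (hφ.differentiableAt (isOpen_ball.mem_nhds (hM ζ hζ))).comp ζ (hMdiff ζ hζ)
    refine DifferentiableAt.differentiableWithinAt ?_
    apply DifferentiableAt.div
    · exact h1.sub_const _
    · exact (differentiableAt_const _).sub ((differentiableAt_const _).mul h1)
    · exact mob_denom_ne hW (hb _ (hM ζ hζ))
  have hF0 : F 0 = 0 := by
    simp [hFdef, hM0, hWdef]
  have hmaps : MapsTo F (ball (0:ℂ) 1) (ball (F 0) 1) := by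
    intro ζ hζ
    rw [hF0, mem_ball_zero_iff]
    exact mob_abs_lt hW (hb _ (hM ζ hζ))
  have hsch : Complex.abs (deriv F 0) ≤ 1 / 1 :=
    Complex.norm_deriv_le_div_of_mapsTo_ball hFdiff (hmaps.mono_right ball_subset_closedBall) one_pos
  rw [div_one] at hsch
  -- compute deriv F 0
  have hdM : HasDerivAt M (1 - a * (starRingEnd ℂ) a) 0 := by
    have hc : HasDerivAt (fun ζ : ℂ => ζ - (-a)) 1 0 := (hasDerivAt_id 0).sub_const _
    have hd : HasDerivAt (fun ζ : ℂ => 1 - (starRingEnd ℂ) (-a) * ζ)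
        (-((starRingEnd ℂ) (-a) * 1)) 0 := (((hasDerivAt_id 0).const_mul _).const_sub 1)
    have hne : (1 : ℂ) - (starRingEnd ℂ) (-a) * 0 ≠ 0 := by simp
    have := hc.div hd hne
    refine this.congr_deriv (Eq.symm ?_)
    field_simp
    simp only [map_neg]; ring
  have hφa : HasDerivAt φ (deriv φ a) a :=
    (hφ.differentiableAt (isOpen_ball.mem_nhds ha)).hasDerivAt
  have hφa' : HasDerivAt φ (deriv φ a) (M 0) := by rwa [hM0]
  have H1 : HasDerivAt (fun ζ => φ (M ζ)) (deriv φ a * (1 - a * (starRingEnd ℂ) a)) 0 := by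
    exact hφa'.comp 0 hdM
  have hφM0 : φ (M 0) = W := by rw [hM0]
  have hWne : (1 : ℂ) - (starRingEnd ℂ) W * W ≠ 0 := by
    simpa using mob_denom_ne hW hW
  have hF' : HasDerivAt F
      ((deriv φ a * (1 - a * (starRingEnd ℂ) a)) / (1 - (starRingEnd ℂ) W * W)) 0 := by
    have hnum : HasDerivAt (fun ζ => φ (M ζ) - W)
        (deriv φ a * (1 - a * (starRingEnd ℂ) a)) 0 := H1.sub_const W
    have hden : HasDerivAt (fun ζ => 1 - (starRingEnd ℂ) W * φ (M ζ))
        (-((starRingEnd ℂ) W * (deriv φ a * (1 - a * (starRingEnd ℂ) a)))) 0 :=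
      ((H1.const_mul _).const_sub 1)
    have hne0 : (1 : ℂ) - (starRingEnd ℂ) W * φ (M 0) ≠ 0 := by rwa [hφM0]
    have := hnum.div hden hne0
    refine this.congr_deriv (Eq.symm ?_)
    rw [hφM0]
    field_simp
    ring
  have hderivF : deriv F 0 = (deriv φ a * (1 - a * (starRingEnd ℂ) a)) /
      (1 - (starRingEnd ℂ) W * W) := hF'.deriv
  rw [hderivF] at hsch
  -- turn into the real inequality
  have e1 : (1 : ℂ) - a * (starRingEnd ℂ) a = ((1 - Complex.normSq a : ℝ) : ℂ) := by
    rw [Complex.mul_conj]; push_cast; ring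
  have e2 : (1 : ℂ) - (starRingEnd ℂ) W * W = ((1 - Complex.normSq W : ℝ) : ℂ) := by
    rw [mul_comm, Complex.mul_conj]; push_cast; ring
  rw [map_div₀, map_mul, e1, e2, Complex.abs_ofReal, Complex.abs_ofReal] at hsch
  have hsa : Complex.normSq a < 1 := by rw [← Complex.sq_abs]; nlinarith [Complex.abs.nonneg a]
  have hsW : Complex.normSq W < 1 := by rw [← Complex.sq_abs]; nlinarith [Complex.abs.nonneg W]
  rw [_root_.abs_of_nonneg (by linarith : (0:ℝ) ≤ 1 - normSq a), _root_.abs_of_nonneg (by linarith : (0:ℝ) ≤ 1 - normSq W)] at hsch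
  rw [div_le_one (by linarith)] at hsch
  rw [← Complex.sq_abs, ← Complex.sq_abs] at hsch
  exact hsch


lemma key_ineq {r s : ℝ} (hr0 : 0 ≤ r) (hr1 : r < 1) (hs0 : 0 ≤ s) (hs1 : s ≤ 1)
    {n : ℕ} (hn : 1 ≤ n) :
    ((n:ℝ) * r^(n-1) * s + r^n * ((1 - s^2)/(1-r^2))) * (1 - r^(2*n))
      ≤ (n:ℝ) * r^(n-1) * (1 - r^(2*n) * s^2) := by
  have h2 : (0:ℝ) < 1 - r^2 := by nlinarith
  set S := ∑ j ∈ Finset.range n, r^(2*j) with hS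
  have hgeo : (1 - r^2) * S = 1 - r^(2*n) := by
    have hx : ∀ j : ℕ, r^(2*j) = (r^2)^j := fun j => by rw [← pow_mul]
    rw [hS]
    simp_rw [hx]
    rcases eq_or_ne (r^2) 1 with h | h
    · nlinarith
    · rw [geom_sum_eq h, ← pow_mul]
      field_simp [sub_ne_zero.mpr h]
      ring
  have hSnn : 0 ≤ S := Finset.sum_nonneg (fun j _ => by positivity)
  have hT2nn : (0:ℝ) ≤ r^(2*n) := by positivity
  have hT2le : r^(2*n) ≤ 1 := pow_le_one₀ hr0 hr1.le
  have hpair : 2 * (r * S) ≤ (n:ℝ) * (1 + r^(2*n)) := by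
    have hmul : r * S = ∑ j ∈ Finset.range n, r^(2*j+1) := by
      rw [hS, Finset.mul_sum]
      congr 1; ext j; rw [← pow_succ']
    have hrefl : ∑ j ∈ Finset.range n, r^(2*(n-1-j)+1) = ∑ j ∈ Finset.range n, r^(2*j+1) :=
      Finset.sum_range_reflect (fun j => r^(2*j+1)) n
    have h2sum : 2 * (r * S) = ∑ j ∈ Finset.range n,
        (r^(2*j+1) + r^(2*(n-1-j)+1)) := by
      rw [Finset.sum_add_distrib, hrefl, hmul]; ring
    rw [h2sum]
    have hconst : (n:ℝ) * (1 + r^(2*n)) = ∑ _j ∈ Finset.range n, (1 + r^(2*n)) := by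
      rw [Finset.sum_const, Finset.card_range]; ring
    rw [hconst]
    apply Finset.sum_le_sum
    intro j hj
    have hjn : j < n := Finset.mem_range.mp hj
    have ha1 : r^(2*j+1) ≤ 1 := pow_le_one₀ hr0 hr1.le
    have hb1 : r^(2*(n-1-j)+1) ≤ 1 := pow_le_one₀ hr0 hr1.le
    have hab : r^(2*j+1) * r^(2*(n-1-j)+1) = r^(2*n) := by
      rw [← pow_add]; congr 1; omega
    nlinarith [mul_nonneg (sub_nonneg.mpr ha1) (sub_nonneg.mpr hb1)]
  have hdiv : (1 - s^2)/(1-r^2) * (1 - r^(2*n)) = (1-s^2) * S := by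
    rw [← hgeo]; field_simp
  have hrn1 : (0:ℝ) ≤ r^(n-1) := by positivity
  have hrn : r^n = r^(n-1) * r := by rw [← pow_succ]; congr 1; omega
  have hn0 : (0:ℝ) ≤ (n:ℝ) := Nat.cast_nonneg n
  have h1s2 : (0:ℝ) ≤ 1 - s^2 := by nlinarith
  have inner : (n:ℝ) * s * (1 - r^(2*n)) + r * (1-s^2) * S ≤ (n:ℝ) * (1 - r^(2*n) * s^2) := by
    have h3 : r * (1-s^2) * S ≤ (n:ℝ) * (1 + r^(2*n)) * (1-s^2) / 2 := by
      nlinarith [mul_le_mul_of_nonneg_right hpair h1s2]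
    nlinarith [mul_nonneg (mul_nonneg hn0 (sub_nonneg.mpr hT2le)) (sq_nonneg (1-s))]
  calc ((n:ℝ) * r^(n-1) * s + r^n * ((1 - s^2)/(1-r^2))) * (1 - r^(2*n))
      = r^(n-1) * ((n:ℝ) * s * (1 - r^(2*n))) + r^n * ((1 - s^2)/(1-r^2) * (1 - r^(2*n))) := by
        ring
    _ = r^(n-1) * ((n:ℝ) * s * (1 - r^(2*n)) + r * (1-s^2) * S) := by
        rw [hdiv, hrn]; ring
    _ ≤ r^(n-1) * ((n:ℝ) * (1 - r^(2*n) * s^2)) := by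
        exact mul_le_mul_of_nonneg_left inner hrn1
    _ = (n:ℝ) * r^(n-1) * (1 - r^(2*n) * s^2) := by ring


lemma schwarz_pick' {φ : ℂ → ℂ} (hφ : DifferentiableOn ℂ φ (ball 0 1))
    (hb : ∀ z ∈ ball (0:ℂ) 1, Complex.abs (φ z) ≤ 1) {a : ℂ} (ha : a ∈ ball (0:ℂ) 1) :
    Complex.abs (deriv φ a) * (1 - (Complex.abs a) ^ 2) ≤ 1 - (Complex.abs (φ a)) ^ 2 := by
  have key : ∀ s : ℝ, s ∈ Ioo (0:ℝ) 1 →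
      s * (Complex.abs (deriv φ a) * (1 - (Complex.abs a) ^ 2))
        ≤ 1 - s^2 * (Complex.abs (φ a)) ^ 2 := by
    intro s hs
    obtain ⟨hs0, hs1⟩ := hs
    have hφs : DifferentiableOn ℂ (fun z => (s:ℂ) * φ z) (ball 0 1) :=
      DifferentiableOn.const_mul hφ _
    have hbs : ∀ z ∈ ball (0:ℂ) 1, Complex.abs ((s:ℂ) * φ z) < 1 := by
      intro z hz
      rw [map_mul, Complex.abs_ofReal, _root_.abs_of_nonneg hs0.le]
      nlinarith [hb z hz, Complex.abs.nonneg (φ z)]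
    have hsp := schwarz_pick hφs hbs ha
    have hd : deriv (fun z => (s:ℂ) * φ z) a = (s:ℂ) * deriv φ a := by
      exact deriv_const_mul _ (hφ.differentiableAt (isOpen_ball.mem_nhds ha))
    rw [hd, map_mul, Complex.abs_ofReal, _root_.abs_of_nonneg hs0.le] at hsp
    rw [map_mul, Complex.abs_ofReal, _root_.abs_of_nonneg hs0.le] at hsp
    nlinarith [hsp]
  have hne : (nhdsWithin (1:ℝ) (Iio 1)).NeBot := by infer_instance
  have hL : Tendsto (fun s : ℝ => s * (Complex.abs (deriv φ a) * (1 - (Complex.abs a) ^ 2)))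
      (nhdsWithin 1 (Iio 1)) (nhds (Complex.abs (deriv φ a) * (1 - (Complex.abs a) ^ 2))) := by
    have hc : Continuous (fun s : ℝ => s * (Complex.abs (deriv φ a) * (1 - (Complex.abs a) ^ 2))) := by
      continuity
    have h2 := hc.tendsto (1:ℝ)
    simpa using h2.mono_left nhdsWithin_le_nhds
  have hR : Tendsto (fun s : ℝ => 1 - s^2 * (Complex.abs (φ a)) ^ 2)
      (nhdsWithin 1 (Iio 1)) (nhds (1 - (Complex.abs (φ a)) ^ 2)) := by
    have : Continuous (fun s : ℝ => 1 - s^2 * (Complex.abs (φ a)) ^ 2) := by continuity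
    have h2 := this.tendsto (1:ℝ)
    simpa using h2.mono_left nhdsWithin_le_nhds
  refine le_of_tendsto_of_tendsto hL hR ?_
  filter_upwards [Ioo_mem_nhdsLT_of_mem (⟨zero_lt_one, le_refl (1:ℝ)⟩ : (1:ℝ) ∈ Ioc (0:ℝ) 1)]
    with s hs using key s hs


lemma cara_w {n : ℕ} (hn : 1 ≤ n) {α : ℝ} (hα1 : α < 1) {p : ℂ → ℂ} (hp : CaraPn n α p) :
    ∃ φ : ℂ → ℂ, DifferentiableOn ℂ φ (ball 0 1) ∧
      (∀ z ∈ ball (0:ℂ) 1, Complex.abs (φ z) ≤ 1) ∧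
      ∀ z ∈ ball (0:ℂ) 1, p z - 1 = z ^ n * φ z * (p z + 1 - 2*(α:ℂ)) := by
  obtain ⟨hdiff, hp0, hder, hre⟩ := hp
  have hreden : ∀ z ∈ ball (0:ℂ) 1, (0:ℝ) < (p z + 1 - 2*(α:ℂ)).re := by
    intro z hz
    have := hre z hz
    simp only [Complex.sub_re, Complex.add_re, Complex.one_re, Complex.mul_re,
      Complex.ofReal_re, Complex.ofReal_im]
    norm_num
    linarith
  have hdenne : ∀ z ∈ ball (0:ℂ) 1, p z + 1 - 2*(α:ℂ) ≠ 0 := by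
    intro z hz hc
    have := hreden z hz
    rw [hc] at this; simp at this
  set u : ℂ → ℂ := fun z => p z - 1 with hu
  have hudiff : DifferentiableOn ℂ u (ball 0 1) := hdiff.sub_const 1
  have hu0 : ∀ k < n, iteratedDeriv k u 0 = 0 := by
    intro k hk
    match k with
    | 0 => simp [hu, hp0]
    | (m+1) =>
      have hd : deriv u = deriv p := by
        funext z
        exact deriv_sub_const _
      rw [iteratedDeriv_succ', hd, ← iteratedDeriv_succ']
      exact hder (m+1) (Nat.succ_le_succ (Nat.zero_le m)) (by omega)
  obtain ⟨ψ, hψdiff, hψid⟩ := factor_out n u hudiff hu0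
  set φ : ℂ → ℂ := fun z => ψ z / (p z + 1 - 2*(α:ℂ)) with hφ
  have hφdiff : DifferentiableOn ℂ φ (ball 0 1) := by
    apply hψdiff.div ((hdiff.add_const 1).sub_const _)
    exact hdenne
  have hid : ∀ z ∈ ball (0:ℂ) 1, p z - 1 = z ^ n * φ z * (p z + 1 - 2*(α:ℂ)) := by
    intro z hz
    rw [hφ]
    have := hψid z hz
    field_simp [hdenne z hz]
    linear_combination this
  have hball : ∀ ζ ∈ ball (0:ℂ) 1, Complex.abs (ζ ^ n * φ ζ) < 1 := by
    intro ζ hζ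
    have hidζ := hid ζ hζ
    have hne := hdenne ζ hζ
    have hpos : (0:ℝ) < Complex.abs (p ζ + 1 - 2*(α:ℂ)) := by
      simpa [Complex.abs.pos_iff] using hne
    have habs : Complex.abs (p ζ - 1) =
        Complex.abs (ζ ^ n * φ ζ) * Complex.abs (p ζ + 1 - 2*(α:ℂ)) := by
      rw [hidζ, map_mul]
    -- |p-1| < |p+1-2α|
    have hlt : Complex.normSq (p ζ - 1) < Complex.normSq (p ζ + 1 - 2*(α:ℂ)) := by
      have h1 := hre ζ hζ
      simp only [Complex.normSq_apply, Complex.sub_re, Complex.sub_im, Complex.add_re,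
        Complex.add_im, Complex.one_re, Complex.one_im, Complex.mul_re, Complex.mul_im,
        Complex.ofReal_re, Complex.ofReal_im]
      norm_num
      nlinarith
    rw [← Complex.sq_abs, ← Complex.sq_abs] at hlt
    have hlt2 : Complex.abs (p ζ - 1) < Complex.abs (p ζ + 1 - 2*(α:ℂ)) := by
      nlinarith [Complex.abs.nonneg (p ζ - 1), Complex.abs.nonneg (p ζ + 1 - 2*(α:ℂ))]
    nlinarith [Complex.abs.nonneg (ζ ^ n * φ ζ)]
  exact ⟨φ, hφdiff, phi_bound hφdiff n hball, hid⟩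

lemma cara_value_bound {n : ℕ} (hn : 1 ≤ n) {α : ℝ} (hα1 : α < 1) {p : ℂ → ℂ}
    (hp : CaraPn n α p) {z : ℂ} (hz : z ∈ ball (0:ℂ) 1) :
    Complex.abs (p z - 1) ≤ 2*(1-α)*(Complex.abs z)^n / (1 - (Complex.abs z)^n) := by
  obtain ⟨φ, hφdiff, hφle, hid⟩ := cara_w hn hα1 hp
  set w : ℂ := z ^ n * φ z with hw
  have hr1 : Complex.abs z < 1 := mem_ball_zero_iff.mp hz
  have hr0 : (0:ℝ) ≤ Complex.abs z := Complex.abs.nonneg z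
  have ht1 : (Complex.abs z)^n < 1 := pow_lt_one₀ hr0 hr1 (by omega)
  have habsw : Complex.abs w ≤ (Complex.abs z)^n := by
    rw [hw, map_mul, map_pow]
    nlinarith [hφle z hz, Complex.abs.nonneg (φ z), pow_nonneg hr0 n,
      pow_le_one₀ hr0 hr1.le (n := n)]
  have hwlt : Complex.abs w < 1 := lt_of_le_of_lt habsw ht1
  -- (p z - 1) * (1 - w) = 2(1-α) w
  have heq : (p z - 1) * (1 - w) = 2*(1-(α:ℂ)) * w := by
    have := hid z hz
    rw [← hw] at this
    linear_combination this
  have habs2 : Complex.abs (p z - 1) * Complex.abs (1 - w) = 2*(1-α) * Complex.abs w := by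
    have := congrArg Complex.abs heq
    rw [map_mul, map_mul] at this
    rw [this]
    congr 1
    have : ((2:ℂ)*(1-(α:ℂ))) = (((2*(1-α):ℝ)):ℂ) := by push_cast; ring
    rw [this, Complex.abs_ofReal, _root_.abs_of_nonneg (by linarith)]
  have h1w : 1 - Complex.abs w ≤ Complex.abs (1 - w) := by
    have h := Complex.abs.abs_abv_sub_le_abv_sub 1 w
    have h1 : Complex.abs (1:ℂ) = 1 := by simp
    calc 1 - Complex.abs w = |Complex.abs (1:ℂ) - Complex.abs w| := by
          rw [h1]; exact (_root_.abs_of_nonneg (by linarith)).symm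
      _ ≤ Complex.abs (1 - w) := h
  have h1wpos : (0:ℝ) < 1 - Complex.abs w := by linarith
  have step1 : Complex.abs (p z - 1) ≤ 2*(1-α) * Complex.abs w / (1 - Complex.abs w) := by
    rw [le_div_iff₀ h1wpos]
    nlinarith [Complex.abs.nonneg (p z - 1), habs2]
  refine le_trans step1 ?_
  have h2 : (0:ℝ) ≤ 2*(1-α) := by linarith
  gcongr <;> first
    | linarith
    | exact Complex.abs.nonneg w

set_option maxHeartbeats 1000000 in
lemma cara_deriv_bound {n : ℕ} (hn : 1 ≤ n) {p : ℂ → ℂ} (hp : CaraPn n 0 p) {z : ℂ}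
    (hz : z ∈ ball (0:ℂ) 1) :
    Complex.abs (z * deriv p z / p z)
      ≤ 2*(n:ℝ)*(Complex.abs z)^n / (1 - (Complex.abs z)^(2*n)) := by
  obtain ⟨φ, hφdiff, hφle, hid0⟩ := cara_w hn (by norm_num) hp
  have hpdiff := hp.1
  have hre := hp.2.2.2
  set r : ℝ := Complex.abs z with hrdef
  have hr1 : r < 1 := mem_ball_zero_iff.mp hz
  have hr0 : (0:ℝ) ≤ r := Complex.abs.nonneg z
  set s : ℝ := Complex.abs (φ z) with hsdef
  have hs0 : (0:ℝ) ≤ s := Complex.abs.nonneg _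
  have hs1 : s ≤ 1 := hφle z hz
  set w : ℂ → ℂ := fun ζ => ζ ^ n * φ ζ with hwdef
  have hrel : ∀ ζ ∈ ball (0:ℂ) 1, p ζ - 1 = w ζ * (p ζ + 1) := by
    intro ζ hζ
    have := hid0 ζ hζ
    simpa using this
  have habswz : Complex.abs (w z) = r^n * s := by
    rw [hwdef]; simp [map_mul, map_pow, hrdef, hsdef]
  have htn1 : r^n < 1 := pow_lt_one₀ hr0 hr1 (by omega)
  have ht2n1 : r^(2*n) < 1 := pow_lt_one₀ hr0 hr1 (by omega)
  have habsw1 : Complex.abs (w z) < 1 := by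
    rw [habswz]; nlinarith [pow_nonneg hr0 n]
  have h1wne : (1:ℂ) - w z ≠ 0 := by
    intro hc
    have : Complex.abs (1 - w z) = 0 := by rw [hc]; simp
    have h2 : (1:ℝ) - Complex.abs (w z) ≤ Complex.abs (1 - w z) := by
      have h := Complex.abs.abs_abv_sub_le_abv_sub 1 (w z)
      have h1 : Complex.abs (1:ℂ) = 1 := by simp
      calc 1 - Complex.abs (w z) = |Complex.abs (1:ℂ) - Complex.abs (w z)| := by
            rw [h1]; exact (_root_.abs_of_nonneg (by linarith)).symm
        _ ≤ Complex.abs (1 - w z) := h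
    linarith
  -- derivative of w at z
  have hφz : HasDerivAt φ (deriv φ z) z :=
    (hφdiff.differentiableAt (isOpen_ball.mem_nhds hz)).hasDerivAt
  have hw' : HasDerivAt w ((n:ℂ) * z^(n-1) * φ z + z^n * deriv φ z) z :=
    (hasDerivAt_pow n z).mul hφz
  have hp' : HasDerivAt p (deriv p z) z :=
    (hpdiff.differentiableAt (isOpen_ball.mem_nhds hz)).hasDerivAt
  set dw : ℂ := (n:ℂ) * z^(n-1) * φ z + z^n * deriv φ z with hdw
  -- deriv p z * (1 - w z) = dw * (p z + 1)
  have hderiv_eq : deriv p z * (1 - w z) = dw * (p z + 1) := by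
    have heq : (fun ζ => p ζ - 1) =ᶠ[nhds z] (fun ζ => w ζ * (p ζ + 1)) := by
      filter_upwards [isOpen_ball.mem_nhds hz] with ζ hζ using hrel ζ hζ
    have hL : HasDerivAt (fun ζ => p ζ - 1) (deriv p z) z := hp'.sub_const 1
    have hR : HasDerivAt (fun ζ => w ζ * (p ζ + 1)) (dw * (p z + 1) + w z * deriv p z) z :=
      hw'.mul (hp'.add_const 1)
    have h1 : deriv (fun ζ => p ζ - 1) z = deriv (fun ζ => w ζ * (p ζ + 1)) z :=
      heq.deriv_eq
    rw [hL.deriv, hR.deriv] at h1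
    linear_combination h1
  -- real (in)equalities
  have hrez : (0:ℝ) < (p z).re := by simpa using hre z hz
  have hpabs : (p z).re ≤ Complex.abs (p z) := Complex.re_le_abs _
  have hpzne : p z ≠ 0 := by
    intro hc; rw [hc] at hrez; simp at hrez
  -- |p z + 1| * |1 - w z| = 2
  have hp1 : (p z + 1) * (1 - w z) = 2 := by
    have := hrel z hz
    linear_combination this
  have habs_p1 : Complex.abs (p z + 1) * Complex.abs (1 - w z) = 2 := by
    have := congrArg Complex.abs hp1
    rw [map_mul] at this
    simpa using this
  -- Re p z * normSq (1 - w z) = 1 - normSq (w z)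
  have hrekey : (p z).re * Complex.normSq (1 - w z) = 1 - Complex.normSq (w z) := by
    have hc : p z * ((1 - w z) * (starRingEnd ℂ) (1 - w z))
        = (1 + w z) * (starRingEnd ℂ) (1 - w z) := by
      have h2 : p z * (1 - w z) = 1 + w z := by
        have := hrel z hz; linear_combination this
      rw [← mul_assoc, h2]
    rw [Complex.mul_conj] at hc
    have hre2 := congrArg Complex.re hc
    simp only [Complex.mul_re, Complex.ofReal_re, Complex.ofReal_im, Complex.add_re,
      Complex.add_im, Complex.one_re, Complex.one_im, Complex.conj_re, Complex.conj_im,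
      Complex.sub_re, Complex.sub_im, Complex.normSq_apply, mul_zero, sub_zero, zero_add] at hre2 ⊢
    nlinarith [hre2]
  -- put everything together
  set A : ℝ := Complex.abs (deriv p z) with hA'
  set B : ℝ := Complex.abs (1 - w z) with hB'
  set C : ℝ := Complex.abs (p z + 1) with hC'
  set D : ℝ := Complex.abs dw with hD'
  set d : ℝ := (p z).re with hd'
  have hBpos : (0:ℝ) < B := by
    rw [hB']; simpa [Complex.abs.pos_iff] using h1wne
  have hAB : A * B = D * C := by
    have := congrArg Complex.abs hderiv_eq
    rw [map_mul, map_mul] at this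
    exact this
  have h1r2 : (0:ℝ) < 1 - r^2 := by nlinarith
  have hsp := schwarz_pick' hφdiff hφle hz
  have hphider : Complex.abs (deriv φ z) ≤ (1 - s^2)/(1-r^2) := by
    rw [le_div_iff₀ h1r2]
    exact hsp
  have hDle : D ≤ (n:ℝ) * r^(n-1) * s + r^n * ((1 - s^2)/(1-r^2)) := by
    rw [hD', hdw]
    refine le_trans (Complex.abs.add_le _ _) ?_
    rw [map_mul, map_mul, map_mul, map_pow, map_pow]
    have h1 : Complex.abs ((n:ℂ)) = (n:ℝ) := by
      simp
    rw [h1]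
    gcongr
  have h2npos : (0:ℝ) < 1 - r^(2*n) := by linarith
  have hK : D * (1 - r^(2*n)) ≤ (n:ℝ) * r^(n-1) * (1 - r^(2*n) * s^2) :=
    le_trans (mul_le_mul_of_nonneg_right hDle h2npos.le) (key_ineq hr0 hr1 hs0 hs1 hn)
  have hr2n : r^(2*n) = (r^n)^2 := by rw [← pow_mul, mul_comm]
  have hred : d * B^2 = 1 - r^(2*n) * s^2 := by
    have h1 : Complex.normSq (1 - w z) = B^2 := by rw [hB', Complex.sq_abs]
    have h2 : Complex.normSq (w z) = (r^n * s)^2 := by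
      rw [← Complex.sq_abs, habswz]
    rw [h1, h2] at hrekey
    rw [hrekey, hr2n]; ring
  have hA2 : A * B^2 = 2 * D := by
    calc A * B^2 = (A*B)*B := by ring
      _ = (D*C)*B := by rw [hAB]
      _ = D*(C*B) := by ring
      _ = 2*D := by rw [habs_p1]; ring
  have hdpos : (0:ℝ) < d := hrez
  have hrn : r^n = r^(n-1) * r := by rw [← pow_succ]; congr 1; omega
  have hPpos : (0:ℝ) < Complex.abs (p z) := by
    simpa [Complex.abs.pos_iff] using hpzne
  have goal_eq : Complex.abs (z * deriv p z / p z) = r * A / Complex.abs (p z) := by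
    rw [map_div₀, map_mul]
  rw [goal_eq]
  have step1 : r * A / Complex.abs (p z) ≤ r * A / d :=
    div_le_div_of_nonneg_left (by positivity) hdpos hpabs
  refine le_trans step1 ?_
  rw [div_le_div_iff₀ hdpos h2npos]
  -- r * A * (1 - r^(2n)) ≤ 2 n r^n * d
  have hmain : (r * A) * (1-r^(2*n)) * B^2 ≤ (2*(n:ℝ)*r^n*d) * B^2 := by
    calc (r * A) * (1-r^(2*n)) * B^2 = r * (A * B^2) * (1-r^(2*n)) := by ring
      _ = 2 * r * (D * (1-r^(2*n))) := by rw [hA2]; ring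
      _ ≤ 2 * r * ((n:ℝ) * r^(n-1) * (1 - r^(2*n) * s^2)) := by
          have h2r : (0:ℝ) ≤ 2*r := by linarith
          exact mul_le_mul_of_nonneg_left hK h2r
      _ = 2 * (n:ℝ) * r^n * (1 - r^(2*n) * s^2) := by rw [hrn]; ring
      _ = (2*(n:ℝ)*r^n*d) * B^2 := by rw [← hred]; ring
  have hB2 : (0:ℝ) < B^2 := by positivity
  calc r * A * (1 - r^(2*n))
      ≤ 2*(n:ℝ)*r^n*d := le_of_mul_le_mul_right (by linarith [hmain]) hB2
    _ = 2*(n:ℝ)*r^n*d := rfl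


lemma mem_deltaSG {w : ℂ}
    (hw : Complex.abs (w - 1) < (Real.exp 1 - 1) / (Real.exp 1 + 1)) : w ∈ DeltaSG := by
  set E := Real.exp 1 with hE
  have hE1 : 1 < E := by rw [hE]; nlinarith [Real.exp_one_gt_d9]
  set c : ℝ := (E - 1) / (E + 1) with hc
  have hc0 : 0 < c := div_pos (by linarith) (by linarith)
  have hc1 : c < 1 := by rw [hc, div_lt_one (by linarith)]; linarith
  set u : ℂ := w - 1 with hu
  have hu1 : Complex.abs u < 1 := lt_trans hw hc1
  have h1u : (1:ℂ) + u ≠ 0 := by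
    intro hcon
    have : Complex.abs u = 1 := by
      have : u = -1 := by linear_combination hcon
      rw [this]; simp
    linarith
  have h1u' : (1:ℂ) - u ≠ 0 := by
    intro hcon
    have : Complex.abs u = 1 := by
      have : u = 1 := by linear_combination -hcon
      rw [this]; simp
    linarith
  set D : ℂ := Complex.log (1 + u) - Complex.log (1 - u) with hD
  -- series for D
  have hs1 : HasSum (fun k : ℕ => (-1)^(k+1) * u^k / k) (Complex.log (1 + u)) :=
    Complex.hasSum_taylorSeries_log (by simpa using hu1)
  have hs2 : HasSum (fun k : ℕ => (-1)^(k+1) * (-u)^k / k) (Complex.log (1 - u)) := by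
    have := Complex.hasSum_taylorSeries_log (z := -u) (by simpa using hu1)
    simpa [sub_eq_add_neg] using this
  have hsD : HasSum (fun k : ℕ => (-1)^(k+1) * u^k / k - (-1)^(k+1) * (-u)^k / k) D :=
    hs1.sub hs2
  -- reindex over odd integers
  have hodd : HasSum (fun k : ℕ => 2 * u^(2*k+1) / ((2*k+1 : ℕ) : ℂ)) D := by
    have hinj : Function.Injective (fun k : ℕ => 2*k+1) := by
      intro a b hab; dsimp at hab; omega
    have hzero : ∀ m, m ∉ Set.range (fun k : ℕ => 2*k+1) →
        (-1:ℂ)^(m+1) * u^m / m - (-1)^(m+1) * (-u)^m / m = 0 := by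
      intro m hm
      have hev : Even m := by
        rcases Nat.even_or_odd m with he | ho
        · exact he
        · exfalso; apply hm; obtain ⟨k, hk⟩ := ho; exact ⟨k, by dsimp; omega⟩
      rw [hev.neg_pow]
      ring
    have hh := (Function.Injective.hasSum_iff hinj hzero).mpr hsD
    have hfun : ((fun m : ℕ => (-1:ℂ)^(m+1) * u^m / m - (-1)^(m+1) * (-u)^m / m)
        ∘ (fun k : ℕ => 2*k+1)) = (fun k : ℕ => 2 * u^(2*k+1) / ((2*k+1 : ℕ) : ℂ)) := by
      funext k
      simp only [Function.comp]
      have hoddk : Odd (2*k+1) := ⟨k, by ring⟩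
      rw [hoddk.neg_pow]
      have hE2 : (-1:ℂ)^(2*k+1+1) = 1 := by
        have : Even (2*k+1+1) := ⟨k+1, by ring⟩
        exact this.neg_one_pow
      rw [hE2]
      ring
    rwa [hfun] at hh
  -- comparison with the real series
  set x : ℝ := Complex.abs u with hx
  have hx1 : |x| < 1 := by rw [hx, _root_.abs_of_nonneg (Complex.abs.nonneg u)]; exact hu1
  have hreal : HasSum (fun k : ℕ => (2:ℝ) * (1 / (2 * k + 1)) * x ^ (2 * k + 1))
      (Real.log (1+x) - Real.log (1-x)) := Real.hasSum_log_sub_log_of_abs_lt_one hx1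
  have hnorm : (fun k : ℕ => ‖2 * u^(2*k+1) / ((2*k+1 : ℕ):ℂ)‖)
      = (fun k : ℕ => (2:ℝ) * (1 / (2 * k + 1)) * x ^ (2 * k + 1)) := by
    funext k
    rw [norm_div, norm_mul, norm_pow]
    simp only [Complex.norm_natCast, Complex.norm_eq_abs]
    have h2 : Complex.abs 2 = 2 := by
      simpa using Complex.abs_ofReal 2
    have h3 : Complex.abs ((2*k+1 : ℕ) : ℂ) = ((2*k+1 : ℕ) : ℝ) := Complex.abs_natCast _
    rw [h2, h3, ← hx]
    push_cast
    ring
  have hGsum : Summable (fun k : ℕ => ‖2 * u^(2*k+1) / ((2*k+1 : ℕ):ℂ)‖) := by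
    rw [hnorm]; exact hreal.summable
  have hnormsum : HasSum (fun k : ℕ => ‖2 * u^(2*k+1) / ((2*k+1 : ℕ):ℂ)‖)
      (Real.log (1+x) - Real.log (1-x)) := by
    rw [hnorm]; exact hreal
  have hDle : ‖D‖ ≤ Real.log (1+x) - Real.log (1-x) := by
    rw [← hodd.tsum_eq, ← hnormsum.tsum_eq]
    exact norm_tsum_le_tsum_norm hGsum
  have hx0 : 0 ≤ x := Complex.abs.nonneg u
  have hL1 : Real.log (1+x) - Real.log (1-x) < 1 := by
    have hlog1 : Real.log (1+x) < Real.log (1+c) := Real.log_lt_log (by linarith) (by linarith)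
    have hlog2 : Real.log (1-c) < Real.log (1-x) := Real.log_lt_log (by linarith) (by linarith)
    have hlogc : Real.log (1+c) - Real.log (1-c) = 1 := by
      have hrat : (1+c)/(1-c) = E := by
        rw [hc]; field_simp; ring
      rw [← Real.log_div (by linarith) (by linarith), hrat, hE, Real.log_exp]
    linarith
  have hDlt : Complex.abs D < 1 := lt_of_le_of_lt hDle hL1
  -- identify log with D
  have hexpD : Complex.exp D = (1+u)/(1-u) := by
    rw [hD, Complex.exp_sub, Complex.exp_log h1u, Complex.exp_log h1u']
  have hlogD : Complex.log ((1+u)/(1-u)) = D := by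
    rw [← hexpD]
    apply Complex.log_exp
    · have := Complex.abs_im_le_abs D
      have hpi := Real.pi_gt_three
      have := neg_abs_le D.im
      linarith [abs_le.mp (le_trans (Complex.abs_im_le_abs D) hDlt.le) |>.1]
    · have := le_trans (Complex.abs_im_le_abs D) hDlt.le
      have hpi := Real.pi_gt_three
      linarith [abs_le.mp this |>.2]
  have hfrac : w / (2 - w) = (1+u)/(1-u) := by
    have e1 : (1:ℂ) + u = w := by rw [hu]; ring
    have e2 : (1:ℂ) - u = 2 - w := by rw [hu]; ring
    rw [e1, e2]
  show Complex.abs (Complex.log (w / (2-w))) < 1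
  rw [hfrac, hlogD]
  exact hDlt


lemma radius_pos {α : ℝ} (hα0 : 0 ≤ α) (hα1 : α < 1) {n : ℕ} (hn : 1 ≤ n) :
    0 < (Real.exp 1 - 1) /
        ((1 + Real.exp 1) * (1 + (n:ℝ) - α) +
          Real.sqrt ((Real.exp 1 + 1)^2 * (1 + (n:ℝ) - α)^2 +
            (Real.exp 1 - 1) * ((1 - 2*α) * (Real.exp 1 + 1) + 2*Real.exp 1))) := by
  have hE1 : 1 < Real.exp 1 := by nlinarith [Real.exp_one_gt_d9]
  have hA : (1:ℝ) < 1 + (n:ℝ) - α := by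
    have : (1:ℝ) ≤ (n:ℝ) := by exact_mod_cast hn
    linarith
  apply div_pos (by linarith)
  have h1 : 0 < (1 + Real.exp 1) * (1 + (n:ℝ) - α) := by nlinarith
  have h2 : 0 ≤ Real.sqrt ((Real.exp 1 + 1)^2 * (1 + (n:ℝ) - α)^2 +
      (Real.exp 1 - 1) * ((1 - 2*α) * (Real.exp 1 + 1) + 2*Real.exp 1)) := Real.sqrt_nonneg _
  linarith

set_option maxHeartbeats 1000000 in
lemma radius_ineq {α t : ℝ} (hα0 : 0 ≤ α) (hα1 : α < 1) {n : ℕ} (hn : 1 ≤ n) (ht0 : 0 < t)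
    (htT : t < (Real.exp 1 - 1) /
        ((1 + Real.exp 1) * (1 + (n:ℝ) - α) +
          Real.sqrt ((Real.exp 1 + 1)^2 * (1 + (n:ℝ) - α)^2 +
            (Real.exp 1 - 1) * ((1 - 2*α) * (Real.exp 1 + 1) + 2*Real.exp 1)))) :
    2*(1-α)*t/(1-t) + 2*(n:ℝ)*t/(1-t^2) < (Real.exp 1 - 1)/(Real.exp 1 + 1) := by
  set E := Real.exp 1 with hE
  have hE1 : 1 < E := by rw [hE]; nlinarith [Real.exp_one_gt_d9]
  set c : ℝ := (E - 1)/(E + 1) with hc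
  have hc0 : 0 < c := div_pos (by linarith) (by linarith)
  have hc1 : c < 1 := by rw [hc, div_lt_one (by linarith)]; linarith
  set A : ℝ := 1 + (n:ℝ) - α with hA
  have hA1 : (1:ℝ) < A := by
    have : (1:ℝ) ≤ (n:ℝ) := by exact_mod_cast hn
    rw [hA]; linarith
  set B : ℝ := c + 2 - 2*α with hB
  have hB0 : 0 < B := by rw [hB]; linarith
  set S : ℝ := Real.sqrt (A^2 + B*c) with hS
  have hS0 : 0 ≤ S := Real.sqrt_nonneg _
  have hSsq : S^2 = A^2 + B*c := Real.sq_sqrt (by positivity)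
  have hAS : 0 < A + S := by linarith
  -- rewrite the hypothesis bound
  have hinner : (E+1)^2*A^2 + (E-1)*((1-2*α)*(E+1)+2*E) = (E+1)^2*(A^2 + B*c) := by
    rw [hB, hc]
    field_simp
    ring
  have hsqrt : Real.sqrt ((E+1)^2*A^2 + (E-1)*((1-2*α)*(E+1)+2*E)) = (E+1)*S := by
    rw [hinner, hS, Real.sqrt_mul (by positivity : (0:ℝ) ≤ (E+1)^2) (A^2 + B*c),
      Real.sqrt_sq (by linarith : (0:ℝ) ≤ E+1)]
  have hTlhs : (E - 1) / ((1 + E) * A + Real.sqrt ((E+1)^2*A^2 +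
      (E-1)*((1-2*α)*(E+1)+2*E))) = c/(A+S) := by
    rw [hsqrt, hc, div_div]
    congr 1
    ring
  rw [hTlhs] at htT
  -- key quadratic inequality
  have h1 : t * (A + S) < c := (lt_div_iff₀ hAS).mp htT
  have h2 : B * c = (S - A) * (S + A) := by nlinarith [hSsq]
  have hBt : B * t < S - A := by
    have h3 : B * (t * (A + S)) < B * c := mul_lt_mul_of_pos_left h1 hB0
    rw [h2] at h3
    have h4 : (B * t) * (A + S) < (S - A) * (A + S) := by nlinarith [h3]
    exact lt_of_mul_lt_mul_right h4 hAS.le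
  have hQ : B * t^2 + 2*A*t - c < 0 := by nlinarith [h1, hBt, ht0]
  -- conclude
  have ht1 : t < 1 := lt_trans (lt_of_lt_of_le htT (by
      apply div_le_of_le_mul₀ hAS.le hc0.le
      nlinarith)) hc1
  have h1t : (0:ℝ) < 1 - t := by linarith
  have h1t2 : (0:ℝ) < 1 - t^2 := by nlinarith
  have e1 : 2*(1-α)*t/(1-t) = 2*(1-α)*t*(1+t)/(1-t^2) := by
    rw [div_eq_div_iff (ne_of_gt h1t) (ne_of_gt h1t2)]
    ring
  rw [e1, ← add_div, div_lt_iff₀ h1t2]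
  rw [hB] at hQ
  rw [hA] at hQ
  nlinarith [hQ]


theorem stmt_17 (n : ℕ) (hn : 1 ≤ n) (α : ℝ) (hα0 : 0 ≤ α) (hα1 : α < 1)
    (g : ℂ → ℂ)
    (hg : DifferentiableOn ℂ g (ball 0 1))
    (hg0 : g 0 = 0) (hg'0 : deriv g 0 = 1)
    (hgne : ∀ z ∈ ball (0 : ℂ) 1, z ≠ 0 → g z ≠ 0)
    (hgstar : CaraPn n α (fun z => if z = 0 then 1 else z * deriv g z / g z))
    (h : ℂ → ℂ) (hh : CaraPn n 0 h)
    (f : ℂ → ℂ) (hf : ∀ z, f z = g z * h z) :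
    ∀ z ∈ ball (0 : ℂ) 1, 0 < ‖z‖ →
      ‖z‖ <
        ((Real.exp 1 - 1) /
          ((1 + Real.exp 1) * (1 + n - α) +
            Real.sqrt ((Real.exp 1 + 1) ^ 2 * (1 + n - α) ^ 2 +
              (Real.exp 1 - 1) * ((1 - 2 * α) * (Real.exp 1 + 1) + 2 * Real.exp 1))))
          ^ ((1 : ℝ) / n) →
      z * deriv f z / f z ∈ DeltaSG := by
  intro z hzball hz0 hzlt
  have hzne : z ≠ 0 := by
    intro hc; rw [hc] at hz0; simp at hz0
  set X : ℝ := (Real.exp 1 - 1) /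
      ((1 + Real.exp 1) * (1 + (n:ℝ) - α) +
        Real.sqrt ((Real.exp 1 + 1) ^ 2 * (1 + (n:ℝ) - α) ^ 2 +
          (Real.exp 1 - 1) * ((1 - 2 * α) * (Real.exp 1 + 1) + 2 * Real.exp 1))) with hX
  have hX0 : 0 < X := radius_pos hα0 hα1 hn
  set r : ℝ := Complex.abs z with hr
  have hr0 : 0 ≤ r := Complex.abs.nonneg z
  have hr1 : r < 1 := mem_ball_zero_iff.mp hzball
  have hnne : (n:ℝ) ≠ 0 := by positivity
  -- r^n < X
  have hpow : (X ^ ((1:ℝ)/n)) ^ n = X := by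
    rw [← Real.rpow_natCast (X ^ ((1:ℝ)/n)) n, ← Real.rpow_mul hX0.le]
    rw [one_div, inv_mul_cancel₀ hnne, Real.rpow_one]
  have htX : r ^ n < X := by
    calc r ^ n < (X ^ ((1:ℝ)/n)) ^ n := by
          apply pow_lt_pow_left₀ hzlt hr0 (by omega)
      _ = X := hpow
  have ht0 : 0 < r ^ n := by positivity
  -- bounds
  have hrad := radius_ineq hα0 hα1 hn ht0 htX
  have hvb := cara_value_bound hn hα1 hgstar hzball
  have hdb := cara_deriv_bound hn hh hzball
  -- nonvanishing
  have hrez : (0:ℝ) < (h z).re := by simpa using hh.2.2.2 z hzball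
  have hhz : h z ≠ 0 := by
    intro hc; rw [hc] at hrez; simp at hrez
  have hgz : g z ≠ 0 := hgne z hzball hzne
  -- derivative of f
  have hgd : DifferentiableAt ℂ g z := hg.differentiableAt (isOpen_ball.mem_nhds hzball)
  have hhd : DifferentiableAt ℂ h z := hh.1.differentiableAt (isOpen_ball.mem_nhds hzball)
  have hfeq : f = fun ζ => g ζ * h ζ := funext hf
  have hfd : deriv f z = deriv g z * h z + g z * deriv h z := by
    rw [hfeq]
    exact (hgd.hasDerivAt.mul hhd.hasDerivAt).deriv
  -- the key decomposition
  have hpz : (fun z : ℂ => if z = 0 then 1 else z * deriv g z / g z) z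
      = z * deriv g z / g z := if_neg hzne
  have hdecomp : z * deriv f z / f z - 1
      = ((fun z : ℂ => if z = 0 then 1 else z * deriv g z / g z) z - 1)
        + z * deriv h z / h z := by
    rw [hpz, hf z, hfd]
    field_simp
    ring
  -- triangle inequality and conclusion
  have htri : Complex.abs (z * deriv f z / f z - 1)
      ≤ Complex.abs ((fun z : ℂ => if z = 0 then 1 else z * deriv g z / g z) z - 1)
        + Complex.abs (z * deriv h z / h z) := by
    rw [hdecomp]
    exact Complex.abs.add_le _ _
  have hfinal : Complex.abs (z * deriv f z / f z - 1)
      < (Real.exp 1 - 1)/(Real.exp 1 + 1) := by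
    have h2n : (Complex.abs z)^(2*n) = (r^n)^2 := by
      rw [hr, ← pow_mul, mul_comm]
    calc Complex.abs (z * deriv f z / f z - 1)
        ≤ Complex.abs ((fun z : ℂ => if z = 0 then 1 else z * deriv g z / g z) z - 1)
          + Complex.abs (z * deriv h z / h z) := htri
      _ ≤ 2*(1-α)*(r^n)/(1-r^n) + 2*(n:ℝ)*(r^n)/(1-(r^n)^2) := by
          apply add_le_add
          · exact hvb
          · rw [← h2n]; exact hdb
      _ < (Real.exp 1 - 1)/(Real.exp 1 + 1) := hrad
  exact mem_deltaSG hfinal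
end
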